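/- arXiv:2301.13850 — 5 statements merged into one kernel-verified Lean document; each statement's English description precedes it below -/
import Mathlib

section
/- Let E = A·B₂^d + u be an ellipsoid in ℝ^d. If for some d × d matrix A' and vector v one has E + v ⊆ A'·B₂^d, then A Aᵀ ⪯ A'(A')ᵀ in the positive semidefinite (Loewner) order. -/
open scoped ENNReal
open MeasureTheory ProbabilityTheory Matrix Set Bornology

/-- The `ℓ_p` norm of a finite-dimensional real vector, `p ∈ [1,∞]`. -/
noncomputable def pnorm (p : ℝ≥0∞) {ι : Type*} [Fintype ι] (x : ι → ℝ) : ℝ :=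
  if p = ∞ then ⨆ i, |x i| else (∑ i, |x i| ^ p.toReal) ^ (1 / p.toReal)

/-- `tr_p M`: the `ℓ_p` norm of the diagonal of a square matrix. -/
noncomputable def trp (p : ℝ≥0∞) {ι : Type*} [Fintype ι] (M : Matrix ι ι ℝ) : ℝ :=
  pnorm p (fun i => M i i)

/-- The closed Euclidean unit ball. -/
def ball2 (ι : Type*) [Fintype ι] : Set (ι → ℝ) := {x | ∑ i, (x i) ^ 2 ≤ 1}

/-- `Γ_p(K) = inf { sqrt(tr_{p/2}(A Aᵀ)) : ∃ v, K + v ⊆ A · B₂ }`. -/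
noncomputable def Gamma (p : ℝ≥0∞) {ι : Type*} [Fintype ι] [DecidableEq ι]
    (K : Set (ι → ℝ)) : ℝ :=
  sInf {r : ℝ | ∃ A : Matrix ι ι ℝ,
    r = Real.sqrt (trp (p / 2) (A * Aᵀ)) ∧
    ∃ v : ι → ℝ, (fun x => x + v) '' K ⊆ (fun x => A.mulVec x) '' ball2 ι}

/-- The support function `h_K(θ) = sup_{x ∈ K} ⟨x, θ⟩`. -/
noncomputable def suppFn {ι : Type*} [Fintype ι] (K : Set (ι → ℝ)) (θ : ι → ℝ) : ℝ :=
  sSup ((fun x => ∑ i, x i * θ i) '' K)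

/-- The width function `w_K(θ) = sup_{x ∈ K} ⟨x, θ⟩ - inf_{x ∈ K} ⟨x, θ⟩`. -/
noncomputable def widthFn {ι : Type*} [Fintype ι] (K : Set (ι → ℝ)) (θ : ι → ℝ) : ℝ :=
  sSup ((fun x => ∑ i, x i * θ i) '' K) - sInf ((fun x => ∑ i, x i * θ i) '' K)

/-! The support function of `A'·B₂` in direction `θ` is `‖θᵀA'‖`. Testing the containment
`A·B₂ + w ⊆ A'·B₂` against `±θ` at the points `±y` (both sets are symmetric) cancels the
translation `w`, so `⟪θᵀA, y⟫ ≤ ‖θᵀA'‖` on `B₂`, i.e. `‖θᵀA‖ ≤ ‖θᵀA'‖`; squaring gives the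
quadratic forms of `A Aᵀ` and `A' A'ᵀ` at `θ`. -/

section

variable {ι : Type*} [Fintype ι]

theorem mem_ball2_iff {x : ι → ℝ} : x ∈ ball2 ι ↔ x ⬝ᵥ x ≤ 1 := by
  simp [ball2, dotProduct, sq]

theorem neg_mem_ball2 {x : ι → ℝ} (hx : x ∈ ball2 ι) : -x ∈ ball2 ι := by
  simpa [mem_ball2_iff] using hx

theorem dotProduct_le_sqrt_of_mem_ball2 (b : ι → ℝ) {z : ι → ℝ} (hz : z ∈ ball2 ι) :
    b ⬝ᵥ z ≤ √(b ⬝ᵥ b) :=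
  calc b ⬝ᵥ z ≤ √(b ⬝ᵥ b) * √(z ⬝ᵥ z) := by
        simpa [dotProduct, sq] using Real.sum_mul_le_sqrt_mul_sqrt Finset.univ b z
    _ ≤ √(b ⬝ᵥ b) :=
        mul_le_of_le_one_right (Real.sqrt_nonneg _) (Real.sqrt_le_one.mpr (mem_ball2_iff.mp hz))

theorem dotProduct_self_le_sq_of_forall_mem_ball2 {a : ι → ℝ} {r : ℝ}
    (h : ∀ y ∈ ball2 ι, a ⬝ᵥ y ≤ r) : a ⬝ᵥ a ≤ r ^ 2 := by
  obtain ⟨s, hs_nonneg, hs⟩ : ∃ s : ℝ, 0 ≤ s ∧ s ^ 2 = a ⬝ᵥ a :=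
    ⟨_, Real.sqrt_nonneg _, Real.sq_sqrt (by simpa using dotProduct_star_self_nonneg a)⟩
  rcases hs_nonneg.eq_or_lt with rfl | hs_pos
  · rw [← hs, zero_pow two_ne_zero]
    exact sq_nonneg r
  · have hunit : s⁻¹ • a ∈ ball2 ι := by
      rw [mem_ball2_iff, smul_dotProduct, dotProduct_smul, smul_smul, smul_eq_mul, ← hs]
      field_simp
      exact le_rfl
    have hsr : s ≤ r := by
      have := h _ hunit
      rwa [dotProduct_smul, smul_eq_mul, ← hs, pow_two, inv_mul_cancel_left₀ hs_pos.ne'] at this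
    rw [← hs]
    exact pow_le_pow_left₀ hs_nonneg hsr 2

theorem dotProduct_le_sqrt_of_mem_image_ball2 (A' : Matrix ι ι ℝ)
    (θ : ι → ℝ) {x : ι → ℝ} (hx : x ∈ (fun y => A'.mulVec y) '' ball2 ι) :
    θ ⬝ᵥ x ≤ √((θ ᵥ* A') ⬝ᵥ (θ ᵥ* A')) := by
  obtain ⟨z, hz, rfl⟩ := hx
  rw [dotProduct_mulVec]
  exact dotProduct_le_sqrt_of_mem_ball2 _ hz

theorem vecMul_dotProduct_le_of_translate_subset (A A' : Matrix ι ι ℝ) (u v : ι → ℝ)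
    (h : (fun x => x + v) '' ((fun y => A.mulVec y + u) '' ball2 ι) ⊆
      (fun y => A'.mulVec y) '' ball2 ι)
    (θ : ι → ℝ) {y : ι → ℝ} (hy : y ∈ ball2 ι) :
    (θ ᵥ* A) ⬝ᵥ y ≤ √((θ ᵥ* A') ⬝ᵥ (θ ᵥ* A')) := by
  have bound : ∀ θ y, y ∈ ball2 ι →
      θ ⬝ᵥ (A *ᵥ y + u + v) ≤ √((θ ᵥ* A') ⬝ᵥ (θ ᵥ* A')) := fun θ y hy =>
    dotProduct_le_sqrt_of_mem_image_ball2 A' θ (h ⟨_, ⟨y, hy, rfl⟩, rfl⟩)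
  have h₁ := bound θ y hy
  have h₂ := bound (-θ) (-y) (neg_mem_ball2 hy)
  simp only [dotProduct_add, dotProduct_mulVec, neg_vecMul, mulVec_neg, dotProduct_neg,
    neg_dotProduct, neg_neg] at h₁ h₂
  linarith

end

theorem dotProduct_mul_transpose_mulVec {R ι κ : Type*} [CommSemiring R] [Fintype ι] [Fintype κ]
    (M : Matrix ι κ R) (θ : ι → R) : θ ⬝ᵥ (M * Mᵀ) *ᵥ θ = (θ ᵥ* M) ⬝ᵥ (θ ᵥ* M) := by
  rw [← mulVec_mulVec, dotProduct_mulVec, mulVec_transpose]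

/-- If the ellipsoid `E = A·B₂^d + u` satisfies `E + v ⊆ A'·B₂^d`,
then `A Aᵀ ⪯ A'(A')ᵀ` in the Loewner order. -/
theorem ellipsoid_containment_loewner {d : ℕ} (A A' : Matrix (Fin d) (Fin d) ℝ)
    (u v : Fin d → ℝ)
    (h : (fun x => x + v) '' ((fun y => A.mulVec y + u) '' ball2 (Fin d)) ⊆
      (fun y => A'.mulVec y) '' ball2 (Fin d)) :
    (A' * A'ᵀ - A * Aᵀ).PosSemidef := by
  have hermitian : (A' * A'ᵀ - A * Aᵀ).IsHermitian := by
    simpa using A'.isHermitian_mul_conjTranspose_self.sub A.isHermitian_mul_conjTranspose_self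
  refine PosSemidef.of_dotProduct_mulVec_nonneg hermitian fun θ => ?_
  have hle : (θ ᵥ* A) ⬝ᵥ (θ ᵥ* A) ≤ (θ ᵥ* A') ⬝ᵥ (θ ᵥ* A') := by
    have := dotProduct_self_le_sq_of_forall_mem_ball2
      fun y hy => vecMul_dotProduct_le_of_translate_subset A A' u v h θ hy
    rwa [Real.sq_sqrt (by simpa using dotProduct_star_self_nonneg (θ ᵥ* A'))] at this
  rw [star_trivial, sub_mulVec, dotProduct_sub, dotProduct_mul_transpose_mulVec,
    dotProduct_mul_transpose_mulVec]
  linarith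
end

section
/- The functional Γ_p satisfies the triangle inequality with respect to Minkowski sums: for any bounded sets K, L ⊆ ℝ^d and p ∈ [2, ∞], Γ_p(K + L) ≤ Γ_p(K) + Γ_p(L). -/
open scoped ENNReal Pointwise
open MeasureTheory ProbabilityTheory Matrix Set Bornology

/-! If `K + v ⊆ A·B₂` and `L + w ⊆ B·B₂`, then for every `t > 0` the ellipsoid `C·B₂` with
`C Cᵀ = (1 + t) A Aᵀ + (1 + t⁻¹) B Bᵀ` contains `A·B₂ + B·B₂ ⊇ K + L + (v + w)`: an ellipsoid
is compact and convex, hence cut out by its supporting half-spaces, and the support functions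
compare as `|Aᵀθ| + |Bᵀθ| ≤ |Cᵀθ|` by `2ab ≤ t a² + t⁻¹ b²`. For `p ≥ 2` the functional
`tr_{p/2}` is a norm of the diagonal, so `tr_{p/2}(C Cᵀ) ≤ (1 + t) α² + (1 + t⁻¹) β²` where
`α² = tr_{p/2}(A Aᵀ)` and `β² = tr_{p/2}(B Bᵀ)`, and `t = β / α` turns the right-hand side into
`(α + β)²`. -/

open WithLp

section Pnorm

variable {ι : Type*} [Fintype ι] (q : ℝ≥0∞) [Fact (1 ≤ q)]

lemma pnorm_eq_norm_toLp (x : ι → ℝ) : pnorm q x = ‖toLp q x‖ := by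
  rcases eq_or_ne q ∞ with rfl | hq
  · simp [pnorm, PiLp.norm_eq_ciSup]
  · have hq0 : 0 < q.toReal := ENNReal.toReal_pos (zero_lt_one.trans_le Fact.out).ne' hq
    simp [pnorm, hq, PiLp.norm_eq_sum hq0]

lemma trp_nonneg (M : Matrix ι ι ℝ) : 0 ≤ trp q M := by
  rw [trp, pnorm_eq_norm_toLp]
  exact norm_nonneg _

lemma trp_smul_add_smul_le {a b : ℝ} (ha : 0 ≤ a) (hb : 0 ≤ b) (M N : Matrix ι ι ℝ) :
    trp q (a • M + b • N) ≤ a * trp q M + b * trp q N := by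
  simp only [trp, pnorm_eq_norm_toLp]
  calc ‖toLp q fun i => (a • M + b • N) i i‖
      = ‖a • toLp q (fun i => M i i) + b • toLp q (fun i => N i i)‖ := rfl
    _ ≤ _ := (norm_add_le _ _).trans_eq <| by rw [norm_smul_of_nonneg ha, norm_smul_of_nonneg hb]

end Pnorm

section Ellipsoid

variable {m n : Type*} [Fintype n]

lemma mem_ball2_iff_norm_le {x : n → ℝ} : x ∈ ball2 n ↔ ‖toLp 2 x‖ ≤ 1 := by
  rw [EuclideanSpace.norm_eq, Real.sqrt_le_one]
  simp [ball2]

lemma ball2_eq_image_closedBall :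
    ball2 n = ofLp '' Metric.closedBall (0 : EuclideanSpace ℝ n) 1 := by
  ext x
  simp only [mem_ball2_iff_norm_le, mem_image, mem_closedBall_zero_iff]
  exact ⟨fun hx => ⟨toLp 2 x, hx, rfl⟩, by rintro ⟨y, hy, rfl⟩; exact hy⟩

lemma convex_image_ball2 (A : Matrix m n ℝ) : Convex ℝ ((A *ᵥ ·) '' ball2 n) := by
  rw [ball2_eq_image_closedBall, image_image]
  exact (convex_closedBall _ _).linear_image
    (A.mulVecLin ∘ₗ (WithLp.linearEquiv 2 ℝ (n → ℝ)).toLinearMap)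

lemma isCompact_image_ball2 (A : Matrix m n ℝ) : IsCompact ((A *ᵥ ·) '' ball2 n) := by
  rw [ball2_eq_image_closedBall, image_image]
  exact (isCompact_closedBall _ _).image
    (A.mulVecLin ∘ₗ (WithLp.linearEquiv 2 ℝ (n → ℝ)).toLinearMap).continuous_of_finiteDimensional

lemma mulVec_dotProduct_eq_inner [Fintype m] (A : Matrix m n ℝ) (u : n → ℝ) (θ : m → ℝ) :
    (A *ᵥ u) ⬝ᵥ θ = inner ℝ (toLp 2 u) (toLp 2 (Aᵀ *ᵥ θ)) := by
  rw [EuclideanSpace.inner_toLp_toLp, star_trivial, Matrix.mulVec_transpose,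
    dotProduct_comm, Matrix.dotProduct_mulVec]

lemma mulVec_dotProduct_le_of_mem_ball2 [Fintype m] (A : Matrix m n ℝ) (θ : m → ℝ) {u : n → ℝ}
    (hu : u ∈ ball2 n) : (A *ᵥ u) ⬝ᵥ θ ≤ ‖toLp 2 (Aᵀ *ᵥ θ)‖ := by
  rw [mem_ball2_iff_norm_le] at hu
  calc (A *ᵥ u) ⬝ᵥ θ = inner ℝ (toLp 2 u) (toLp 2 (Aᵀ *ᵥ θ)) := mulVec_dotProduct_eq_inner A u θ
    _ ≤ ‖toLp 2 u‖ * ‖toLp 2 (Aᵀ *ᵥ θ)‖ := real_inner_le_norm _ _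
    _ ≤ ‖toLp 2 (Aᵀ *ᵥ θ)‖ := mul_le_of_le_one_left (norm_nonneg _) hu

lemma exists_mem_ball2_mulVec_dotProduct_eq [Fintype m] (A : Matrix m n ℝ) (θ : m → ℝ) :
    ∃ u ∈ ball2 n, (A *ᵥ u) ⬝ᵥ θ = ‖toLp 2 (Aᵀ *ᵥ θ)‖ := by
  set g := toLp 2 (Aᵀ *ᵥ θ)
  refine ⟨ofLp (‖g‖⁻¹ • g), ?_, ?_⟩
  · rw [mem_ball2_iff_norm_le, toLp_ofLp, norm_smul, norm_inv, norm_norm]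
    exact inv_mul_le_one
  · rw [mulVec_dotProduct_eq_inner, toLp_ofLp, real_inner_smul_left, real_inner_self_eq_norm_sq]
    rcases eq_or_ne ‖g‖ 0 with h | h
    · simp [h]
    · field_simp

lemma mem_image_ball2_of_forall_dotProduct_le [Fintype m] (A : Matrix m n ℝ) {y : m → ℝ}
    (hy : ∀ θ, y ⬝ᵥ θ ≤ ‖toLp 2 (Aᵀ *ᵥ θ)‖) : y ∈ (A *ᵥ ·) '' ball2 n := by
  rw [← iInter_halfSpaces_eq (convex_image_ball2 A) (isCompact_image_ball2 A).isClosed,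
    mem_iInter]
  intro l
  classical
  set θ : m → ℝ := fun i => l fun j => if i = j then 1 else 0
  have hl (x : m → ℝ) : l x = x ⬝ᵥ θ := LinearMap.pi_apply_eq_sum_univ l.toLinearMap x
  obtain ⟨u, hu, hθ⟩ := exists_mem_ball2_mulVec_dotProduct_eq A θ
  exact ⟨A *ᵥ u, mem_image_of_mem _ hu, by rw [hl, hl, hθ]; exact hy θ⟩

lemma image_ball2_add_subset [Fintype m] {n₁ n₂ : Type*} [Fintype n₁] [Fintype n₂]
    (A : Matrix m n₁ ℝ) (B : Matrix m n₂ ℝ) (C : Matrix m n ℝ)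
    (h : ∀ θ, ‖toLp 2 (Aᵀ *ᵥ θ)‖ + ‖toLp 2 (Bᵀ *ᵥ θ)‖ ≤ ‖toLp 2 (Cᵀ *ᵥ θ)‖) :
    (A *ᵥ ·) '' ball2 n₁ + (B *ᵥ ·) '' ball2 n₂ ⊆ (C *ᵥ ·) '' ball2 n := by
  rintro _ ⟨_, ⟨u, hu, rfl⟩, _, ⟨s, hs, rfl⟩, rfl⟩
  refine mem_image_ball2_of_forall_dotProduct_le C fun θ => ?_
  rw [add_dotProduct]
  exact (add_le_add (mulVec_dotProduct_le_of_mem_ball2 A θ hu)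
    (mulVec_dotProduct_le_of_mem_ball2 B θ hs)).trans (h θ)

lemma norm_toLp_transpose_mulVec_sq [Fintype m] (A : Matrix m n ℝ) (θ : m → ℝ) :
    ‖toLp 2 (Aᵀ *ᵥ θ)‖ ^ 2 = θ ⬝ᵥ (A * Aᵀ) *ᵥ θ := by
  rw [← real_inner_self_eq_norm_sq, ← mulVec_dotProduct_eq_inner, dotProduct_comm,
    Matrix.mulVec_mulVec]

lemma norm_transpose_mulVec_add_le [Fintype m] {n₁ n₂ : Type*} [Fintype n₁] [Fintype n₂]
    {A : Matrix m n₁ ℝ} {B : Matrix m n₂ ℝ} {C : Matrix m n ℝ} {t : ℝ} (ht : 0 < t)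
    (hC : C * Cᵀ = (1 + t) • (A * Aᵀ) + (1 + t⁻¹) • (B * Bᵀ)) (θ : m → ℝ) :
    ‖toLp 2 (Aᵀ *ᵥ θ)‖ + ‖toLp 2 (Bᵀ *ᵥ θ)‖ ≤ ‖toLp 2 (Cᵀ *ᵥ θ)‖ := by
  have hsq : ‖toLp 2 (Cᵀ *ᵥ θ)‖ ^ 2
      = (1 + t) * ‖toLp 2 (Aᵀ *ᵥ θ)‖ ^ 2 + (1 + t⁻¹) * ‖toLp 2 (Bᵀ *ᵥ θ)‖ ^ 2 := by
    simp only [norm_toLp_transpose_mulVec_sq, hC, Matrix.add_mulVec, Matrix.smul_mulVec,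
      dotProduct_add, dotProduct_smul, smul_eq_mul]
  refine (pow_le_pow_iff_left₀ (by positivity) (norm_nonneg _) two_ne_zero).mp ?_
  rw [hsq]
  nlinarith [two_mul_le_add_mul_sq (a := ‖toLp 2 (Aᵀ *ᵥ θ)‖) (b := ‖toLp 2 (Bᵀ *ᵥ θ)‖) ht]

end Ellipsoid

open scoped MatrixOrder in
lemma exists_mul_transpose_eq {n : Type*} [Fintype n] [DecidableEq n] {M : Matrix n n ℝ}
    (hM : M.PosSemidef) : ∃ C : Matrix n n ℝ, C * Cᵀ = M := by
  obtain ⟨B, rfl⟩ := CStarAlgebra.nonneg_iff_eq_star_mul_self.mp hM.nonneg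
  exact ⟨Bᵀ, by rw [Matrix.transpose_transpose]; rfl⟩

/-- The optimal weight `t = β / α` is shifted by `δ` so that it stays positive and finite when
`α` or `β` vanishes. -/
lemma one_add_mul_sq_add_one_add_inv_mul_sq_le {α β δ : ℝ} (hα : 0 ≤ α) (hβ : 0 ≤ β)
    (hδ : 0 < δ) :
    (1 + (β + δ) / (α + δ)) * α ^ 2 + (1 + ((β + δ) / (α + δ))⁻¹) * β ^ 2
      ≤ (α + β + δ) ^ 2 := by
  have hA : (β + δ) / (α + δ) * α ^ 2 ≤ (β + δ) * α := by
    rw [div_mul_eq_mul_div, div_le_iff₀ (by positivity)]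
    nlinarith [mul_nonneg (add_nonneg hβ hδ.le) (mul_nonneg hα hδ.le)]
  have hB : ((β + δ) / (α + δ))⁻¹ * β ^ 2 ≤ (α + δ) * β := by
    rw [inv_div, div_mul_eq_mul_div, div_le_iff₀ (by positivity)]
    nlinarith [mul_nonneg (add_nonneg hα hδ.le) (mul_nonneg hβ hδ.le)]
  nlinarith [mul_nonneg hδ.le (add_nonneg hα hβ)]

lemma exists_image_ball2_add_subset_sqrt_trp_le {n : Type*} [Fintype n] [DecidableEq n]
    (q : ℝ≥0∞) [Fact (1 ≤ q)] (A B : Matrix n n ℝ) {δ : ℝ} (hδ : 0 < δ) :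
    ∃ C : Matrix n n ℝ, (A *ᵥ ·) '' ball2 n + (B *ᵥ ·) '' ball2 n ⊆ (C *ᵥ ·) '' ball2 n ∧
      √(trp q (C * Cᵀ)) ≤ √(trp q (A * Aᵀ)) + √(trp q (B * Bᵀ)) + δ := by
  set α := √(trp q (A * Aᵀ))
  set β := √(trp q (B * Bᵀ))
  set t := (β + δ) / (α + δ)
  have ht : 0 < t := by positivity
  have hPSD : ((1 + t) • (A * Aᵀ) + (1 + t⁻¹) • (B * Bᵀ)).PosSemidef := by
    have hAAt := Matrix.posSemidef_self_mul_conjTranspose A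
    have hBBt := Matrix.posSemidef_self_mul_conjTranspose B
    rw [Matrix.conjTranspose_eq_transpose_of_trivial] at hAAt hBBt
    exact (hAAt.smul (by positivity)).add (hBBt.smul (by positivity))
  obtain ⟨C, hC⟩ := exists_mul_transpose_eq hPSD
  refine ⟨C, image_ball2_add_subset A B C (norm_transpose_mulVec_add_le ht hC), ?_⟩
  rw [Real.sqrt_le_left (by positivity)]
  calc trp q (C * Cᵀ) ≤ (1 + t) * α ^ 2 + (1 + t⁻¹) * β ^ 2 := by
        rw [hC, Real.sq_sqrt (trp_nonneg q _), Real.sq_sqrt (trp_nonneg q _)]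
        exact trp_smul_add_smul_le q (by positivity) (by positivity) _ _
    _ ≤ (α + β + δ) ^ 2 :=
        one_add_mul_sq_add_one_add_inv_mul_sq_le (Real.sqrt_nonneg _) (Real.sqrt_nonneg _) hδ

section Gamma

variable {ι : Type*} [Fintype ι] [DecidableEq ι] (p : ℝ≥0∞) {K : Set (ι → ℝ)}

lemma Gamma_le_sqrt_trp {A : Matrix ι ι ℝ} {v : ι → ℝ}
    (hK : (· + v) '' K ⊆ (A *ᵥ ·) '' ball2 ι) : Gamma p K ≤ √(trp (p / 2) (A * Aᵀ)) :=
  csInf_le ⟨0, by rintro _ ⟨_, rfl, _⟩; positivity⟩ ⟨A, rfl, v, hK⟩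

lemma exists_subset_image_ball2 (hK : IsBounded K) :
    ∃ A : Matrix ι ι ℝ, K ⊆ (A *ᵥ ·) '' ball2 ι := by
  have hK₂ : IsBounded (toLp 2 '' K) :=
    (PiLp.continuousLinearEquiv 2 ℝ fun _ : ι => ℝ).symm.lipschitz.isBounded_image hK
  obtain ⟨R, hR, hKR⟩ := hK₂.exists_pos_norm_le
  refine ⟨R • 1, fun x hx => ⟨R⁻¹ • x, ?_, ?_⟩⟩
  · rw [mem_ball2_iff_norm_le, WithLp.toLp_smul, norm_smul,
      Real.norm_of_nonneg (inv_nonneg.2 hR.le)]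
    exact inv_mul_le_one_of_le₀ (hKR _ (mem_image_of_mem _ hx)) hR.le
  · change (R • 1 : Matrix ι ι ℝ) *ᵥ (R⁻¹ • x) = x
    rw [Matrix.smul_mulVec, Matrix.one_mulVec, smul_inv_smul₀ hR.ne']

lemma exists_sqrt_trp_lt_Gamma_add (hK : IsBounded K) {ε : ℝ} (hε : 0 < ε) :
    ∃ (A : Matrix ι ι ℝ) (v : ι → ℝ), (· + v) '' K ⊆ (A *ᵥ ·) '' ball2 ι ∧
      √(trp (p / 2) (A * Aᵀ)) < Gamma p K + ε := by
  obtain ⟨A₀, hA₀⟩ := exists_subset_image_ball2 hK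
  by_contra! h
  have : Gamma p K + ε ≤ Gamma p K :=
    le_csInf ⟨_, A₀, rfl, 0, by simpa using hA₀⟩ fun _ ⟨A, hr, v, hAv⟩ => hr ▸ h A v hAv
  linarith

end Gamma

/-- Triangle inequality for `Γ_p` with respect to Minkowski sums. -/
theorem Gamma_add_le {d : ℕ} (p : ℝ≥0∞) (hp : 2 ≤ p) (K L : Set (Fin d → ℝ))
    (hK : IsBounded K) (hL : IsBounded L) :
    Gamma p (K + L) ≤ Gamma p K + Gamma p L := by
  have : Fact (1 ≤ p / 2) :=
    ⟨by rwa [ENNReal.le_div_iff_mul_le (.inl two_ne_zero) (.inl ENNReal.ofNat_ne_top), one_mul]⟩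
  refine le_of_forall_pos_lt_add fun ε hε => ?_
  obtain ⟨A, v, hA, hAε⟩ := exists_sqrt_trp_lt_Gamma_add p hK (by positivity : 0 < ε / 3)
  obtain ⟨B, w, hB, hBε⟩ := exists_sqrt_trp_lt_Gamma_add p hL (by positivity : 0 < ε / 3)
  obtain ⟨C, hABC, hC⟩ :=
    exists_image_ball2_add_subset_sqrt_trp_le (p / 2) A B (by positivity : 0 < ε / 3)
  have hKL : (· + (v + w)) '' (K + L) ⊆ (C *ᵥ ·) '' ball2 (Fin d) := by
    rw [← add_singleton, ← singleton_add_singleton, add_add_add_comm, add_singleton, add_singleton]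
    exact (add_subset_add hA hB).trans hABC
  calc Gamma p (K + L) ≤ √(trp (p / 2) (C * Cᵀ)) := Gamma_le_sqrt_trp p hKL
    _ < Gamma p K + Gamma p L + ε := by linarith
end

section
/- Hammersley–Chapman–Robbins bound: for any two real-valued random variables X ∼ P and Y ∼ Q with finite second moments and finite χ²-divergence χ²(P‖Q), the standard deviation of Y satisfies sqrt(Var(Y)) ≥ |E[X] − E[Y]| / sqrt(χ²(P‖Q)). -/
/-!
Write `ρ = dP/dQ`. Since `E_Q[ρ] = 1` and `E_Q[ρ X] = E_P[X]`, the mean shift `E_P[X] - E_Q[X]`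
is the covariance `Cov_Q(X, ρ)`, while `Var_Q(ρ) = E_Q[(ρ - 1)²] = χ²(P‖Q)`. The bound is the
Cauchy–Schwarz inequality `|Cov_Q(X, ρ)| ≤ √Var_Q(X) · √Var_Q(ρ)`.
-/

open scoped ENNReal
open MeasureTheory ProbabilityTheory Matrix Set Bornology

theorem abs_integral_mul_le_sqrt_mul_sqrt {α : Type*} [MeasurableSpace α] {μ : Measure α}
    {f g : α → ℝ} (hf : MemLp f 2 μ) (hg : MemLp g 2 μ) :
    |∫ a, f a * g a ∂μ| ≤ √(∫ a, f a ^ 2 ∂μ) * √(∫ a, g a ^ 2 ∂μ) := by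
  have hsq : ∀ h : α → ℝ, ∫ a, ‖h a‖ ^ (2 : ℝ) ∂μ = ∫ a, h a ^ 2 ∂μ := fun h => by
    simp only [Real.rpow_two, Real.norm_eq_abs, sq_abs]
  calc |∫ a, f a * g a ∂μ| ≤ ∫ a, ‖f a‖ * ‖g a‖ ∂μ := by
        simpa only [norm_mul, Real.norm_eq_abs] using
          norm_integral_le_integral_norm (fun a => f a * g a)
    _ ≤ (∫ a, ‖f a‖ ^ (2 : ℝ) ∂μ) ^ (1 / (2 : ℝ)) * (∫ a, ‖g a‖ ^ (2 : ℝ) ∂μ) ^ (1 / (2 : ℝ)) :=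
        integral_mul_norm_le_Lp_mul_Lq .two_two (by simpa using hf) (by simpa using hg)
    _ = √(∫ a, f a ^ 2 ∂μ) * √(∫ a, g a ^ 2 ∂μ) := by
        rw [hsq, hsq, Real.sqrt_eq_rpow, Real.sqrt_eq_rpow]

namespace ProbabilityTheory

variable {Ω : Type*} {mΩ : MeasurableSpace Ω}

lemma abs_covariance_le_sqrt_variance_mul_sqrt_variance {μ : Measure Ω} [IsFiniteMeasure μ]
    {X Y : Ω → ℝ} (hX : MemLp X 2 μ) (hY : MemLp Y 2 μ) :
    |cov[X, Y; μ]| ≤ √Var[X; μ] * √Var[Y; μ] := by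
  rw [covariance, variance_eq_integral hX.aemeasurable, variance_eq_integral hY.aemeasurable]
  exact abs_integral_mul_le_sqrt_mul_sqrt (hX.sub (memLp_const _)) (hY.sub (memLp_const _))

section LikelihoodRatio

variable {P Q : Measure Ω}

lemma memLp_toReal_rnDeriv_of_integrable_sq_sub_one [IsFiniteMeasure Q]
    (hchi : Integrable (fun ω => ((P.rnDeriv Q ω).toReal - 1) ^ 2) Q) :
    MemLp (fun ω => (P.rnDeriv Q ω).toReal) 2 Q := by
  have hmeas := (Measure.measurable_rnDeriv P Q).ennreal_toReal
  have hsub := (memLp_two_iff_integrable_sq (hmeas.sub_const 1).aestronglyMeasurable).mpr hchi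
  convert hsub.add (memLp_const 1) using 1
  ext; simp

variable [IsProbabilityMeasure P]

lemma integral_toReal_rnDeriv_eq_one [SigmaFinite Q] (hPQ : P ≪ Q) :
    Q[fun ω => (P.rnDeriv Q ω).toReal] = 1 := by
  simp [Measure.integral_toReal_rnDeriv hPQ]

lemma variance_toReal_rnDeriv [SigmaFinite Q] (hPQ : P ≪ Q) :
    Var[fun ω => (P.rnDeriv Q ω).toReal; Q] = ∫ ω, ((P.rnDeriv Q ω).toReal - 1) ^ 2 ∂Q := by
  rw [variance_eq_integral (Measure.measurable_rnDeriv P Q).ennreal_toReal.aemeasurable,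
    integral_toReal_rnDeriv_eq_one hPQ]

lemma covariance_toReal_rnDeriv [IsProbabilityMeasure Q] {X : Ω → ℝ} (hPQ : P ≪ Q)
    (hX : MemLp X 2 Q) (hρ : MemLp (fun ω => (P.rnDeriv Q ω).toReal) 2 Q) :
    cov[X, fun ω => (P.rnDeriv Q ω).toReal; Q] = P[X] - Q[X] := by
  rw [covariance_eq_sub hX hρ, integral_toReal_rnDeriv_eq_one hPQ, mul_one,
    ← integral_rnDeriv_smul hPQ]
  simp only [Pi.mul_apply, smul_eq_mul, mul_comm]

end LikelihoodRatio

end ProbabilityTheory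

theorem hammersley_chapman_robbins_general (P Q : Measure ℝ)
    [IsProbabilityMeasure P] [IsProbabilityMeasure Q] (hac : P ≪ Q)
    (hQ2 : MemLp (fun x => x) 2 Q)
    (hchi : Integrable (fun y => ((P.rnDeriv Q y).toReal - 1) ^ 2) Q) :
    |(∫ x, x ∂P) - ∫ y, y ∂Q| /
        Real.sqrt (∫ y, ((P.rnDeriv Q y).toReal - 1) ^ 2 ∂Q) ≤
      Real.sqrt (ProbabilityTheory.variance (fun y => y) Q) := by
  refine div_le_of_le_mul₀ (Real.sqrt_nonneg _) (Real.sqrt_nonneg _) ?_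
  have hρ := memLp_toReal_rnDeriv_of_integrable_sq_sub_one hchi
  calc |(∫ x, x ∂P) - ∫ y, y ∂Q|
      = |cov[fun y => y, fun y => (P.rnDeriv Q y).toReal; Q]| := by
        rw [covariance_toReal_rnDeriv hac hQ2 hρ]
    _ ≤ _ := abs_covariance_le_sqrt_variance_mul_sqrt_variance hQ2 hρ
    _ = _ := by rw [variance_toReal_rnDeriv hac]

/-- Hammersley–Chapman–Robbins bound: for real-valued
distributions `P`, `Q` with finite second moments and finite χ²-divergence,
`sqrt(Var_Q) ≥ |E_P[X] - E_Q[Y]| / sqrt(χ²(P‖Q))`. -/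
theorem hammersley_chapman_robbins (P Q : Measure ℝ)
    [IsProbabilityMeasure P] [IsProbabilityMeasure Q] (hac : P ≪ Q)
    (hP2 : MemLp (fun x => x) 2 P) (hQ2 : MemLp (fun x => x) 2 Q)
    (hchi : Integrable (fun y => ((P.rnDeriv Q y).toReal - 1) ^ 2) Q) :
    |(∫ x, x ∂P) - ∫ y, y ∂Q| /
        Real.sqrt (∫ y, ((P.rnDeriv Q y).toReal - 1) ^ 2 ∂Q) ≤
      Real.sqrt (ProbabilityTheory.variance (fun y => y) Q) :=
  hammersley_chapman_robbins_general P Q hac hQ2 hchi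
end

section
/- Γ_p of a box: for real sequences a_i ≤ b_i (i = 1,…,d) and p ∈ [2,∞), Γ_p([a₁,b₁] × ⋯ × [a_d,b_d]) equals (1/2)·‖b − a‖_q where q = 2p/(p+2); for p = ∞, it equals (1/2)·‖b − a‖₂. In particular, Γ_p([a,b]^d) = d^{1/2 + 1/p}(b − a)/2 for p ∈ [2,∞). -/
/-!
Write `c = (b - a) / 2` for the half-widths of the box and `q` for the exponent with
`1/q = 1/2 + 1/p`.

Upper bound: the diagonal ellipsoid centred at the centre of the box with squared semi-axes
`s_i² = ‖c‖_q^q · c_i^(2-q)` contains the box, because `∑ c_i² / s_i² ≤ 1`, and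
`‖s²‖_{p/2}^{1/2} = ‖c‖_q`.

Lower bound: if `K + v ⊆ A·B₂`, then half the difference of two opposite vertices shows that every
sign pattern `ε ∘ c` lies in `A·B₂`. Pairing with `ε ∘ t`, applying Cauchy–Schwarz and averaging
over all `ε` kills the cross terms and gives `⟨c, t⟩² ≤ ∑ t_i² (AAᵀ)_ii` for every `t`. The choice
`t_i = c_i / (AAᵀ)_ii` yields `∑ c_i² / (AAᵀ)_ii ≤ 1`, and Hölder's inequality for the exponents
`1/q = 1/2 + 1/p` turns this into `‖c‖_q ≤ ‖diag(AAᵀ)‖_{p/2}^{1/2}`.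
-/

open scoped ENNReal
open MeasureTheory ProbabilityTheory Matrix Set Bornology

open Finset

def boolSign (b : Bool) : ℝ := if b then 1 else -1

@[simp] lemma boolSign_mul_self (b : Bool) : boolSign b * boolSign b = 1 := by
  cases b <;> norm_num [boolSign]

@[simp] lemma boolSign_not (b : Bool) : boolSign (!b) = -boolSign b := by
  cases b <;> simp [boolSign]

section Signs

variable {ι : Type*} [Fintype ι] [DecidableEq ι]

lemma sum_boolSign_mul_boolSign_of_ne {i k : ι} (hik : i ≠ k) :
    ∑ ε : ι → Bool, boolSign (ε i) * boolSign (ε k) = 0 := by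
  let flip : (ι → Bool) ≃ (ι → Bool) :=
    { toFun := fun ε => Function.update ε i (!ε i)
      invFun := fun ε => Function.update ε i (!ε i)
      left_inv := fun ε => by simp
      right_inv := fun ε => by simp }
  have h := (Equiv.sum_comp flip fun ε => boolSign (ε i) * boolSign (ε k)).symm
  simp only [flip, Equiv.coe_fn_mk, Function.update_self, Function.update_of_ne hik.symm,
    boolSign_not, neg_mul, sum_neg_distrib] at h
  linarith

lemma sum_sq_sum_boolSign_mul (u : ι → ℝ) :
    ∑ ε : ι → Bool, (∑ i, boolSign (ε i) * u i) ^ 2 = 2 ^ Fintype.card ι * ∑ i, u i ^ 2 := by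
  have hdiag (i : ι) : ∑ ε : ι → Bool, ∑ k, boolSign (ε i) * boolSign (ε k) * (u i * u k) =
      2 ^ Fintype.card ι * u i ^ 2 := by
    rw [sum_comm, sum_eq_single i (fun k _ hki => by
      rw [← sum_mul, sum_boolSign_mul_boolSign_of_ne hki.symm, zero_mul]) (by simp)]
    simp [sq]
  calc ∑ ε : ι → Bool, (∑ i, boolSign (ε i) * u i) ^ 2
      = ∑ i, ∑ ε : ι → Bool, ∑ k, boolSign (ε i) * boolSign (ε k) * (u i * u k) := by
        rw [sum_comm]
        refine sum_congr rfl fun ε _ => ?_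
        rw [sq, sum_mul_sum]
        exact sum_congr rfl fun i _ => sum_congr rfl fun k _ => by ring
    _ = 2 ^ Fintype.card ι * ∑ i, u i ^ 2 := by simp only [hdiag, mul_sum]

end Signs

section Box

variable {ι : Type*} [Fintype ι]

lemma half_smul_sub_mem_ball2 {y z : ι → ℝ} (hy : y ∈ ball2 ι) (hz : z ∈ ball2 ι) :
    (1 / 2 : ℝ) • (y - z) ∈ ball2 ι := by
  simp only [ball2, mem_ofPred_eq, Pi.smul_apply, Pi.sub_apply, smul_eq_mul] at hy hz ⊢
  calc ∑ i, (1 / 2 * (y i - z i)) ^ 2 ≤ ∑ i, (y i ^ 2 + z i ^ 2) / 2 :=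
        sum_le_sum fun i _ => by nlinarith [sq_nonneg (y i + z i)]
    _ ≤ 1 := by rw [← sum_div, sum_add_distrib]; linarith

lemma exists_mem_ball2_mulVec_eq_of_box_subset {a b v : ι → ℝ} (hab : ∀ i, a i ≤ b i)
    {A : Matrix ι ι ℝ}
    (hsub : (fun x => x + v) '' univ.pi (fun i => Icc (a i) (b i)) ⊆ (A *ᵥ ·) '' ball2 ι)
    (ε : ι → Bool) :
    ∃ y ∈ ball2 ι, A *ᵥ y = fun i => boolSign (ε i) * ((b i - a i) / 2) := by
  have vertex (δ : ι → Bool) :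
      (fun i => if δ i then b i else a i) ∈ univ.pi fun i => Icc (a i) (b i) :=
    fun i _ => by by_cases h : δ i <;> simp [h, hab i]
  obtain ⟨y, hy, hAy⟩ := hsub ⟨_, vertex ε, rfl⟩
  obtain ⟨z, hz, hAz⟩ := hsub ⟨_, vertex fun i => !ε i, rfl⟩
  refine ⟨(1 / 2 : ℝ) • (y - z), half_smul_sub_mem_ball2 hy hz, ?_⟩
  simp only at hAy hAz
  rw [Matrix.mulVec_smul, Matrix.mulVec_sub, hAy, hAz]
  funext i
  by_cases h : ε i <;> simp [h, boolSign] <;> ring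

lemma sq_sum_mul_le_of_mulVec_eq {A : Matrix ι ι ℝ} {y c : ι → ℝ} (hy : y ∈ ball2 ι)
    {ε : ι → Bool} (hAy : A *ᵥ y = fun i => boolSign (ε i) * c i) (t : ι → ℝ) :
    (∑ i, c i * t i) ^ 2 ≤ ∑ j, (∑ i, boolSign (ε i) * (t i * A i j)) ^ 2 := by
  set w : ι → ℝ := fun i => boolSign (ε i) * t i
  have hct : ∑ i, c i * t i = ∑ j, (w ᵥ* A) j * y j := by
    calc ∑ i, c i * t i = w ⬝ᵥ (A *ᵥ y) := by
          simp only [hAy, dotProduct, w]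
          exact sum_congr rfl fun i _ => by
            linear_combination (-(c i * t i)) * boolSign_mul_self (ε i)
      _ = ∑ j, (w ᵥ* A) j * y j := by rw [dotProduct_mulVec]; rfl
  have hwA (j : ι) : (w ᵥ* A) j = ∑ i, boolSign (ε i) * (t i * A i j) := by
    simp only [vecMul, dotProduct, w, mul_assoc]
  rw [hct]
  calc (∑ j, (w ᵥ* A) j * y j) ^ 2 ≤ (∑ j, (w ᵥ* A) j ^ 2) * ∑ j, y j ^ 2 :=
        sum_mul_sq_le_sq_mul_sq _ _ _
    _ ≤ ∑ j, (w ᵥ* A) j ^ 2 := mul_le_of_le_one_right (by positivity) hy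
    _ = _ := by simp only [hwA]

lemma mul_transpose_self_apply (A : Matrix ι ι ℝ) (i : ι) : (A * Aᵀ) i i = ∑ j, A i j ^ 2 := by
  simp [Matrix.mul_apply, sq]

lemma sq_sum_mul_le_of_box_subset [DecidableEq ι] {a b v : ι → ℝ} (hab : ∀ i, a i ≤ b i)
    {A : Matrix ι ι ℝ}
    (hsub : (fun x => x + v) '' univ.pi (fun i => Icc (a i) (b i)) ⊆ (A *ᵥ ·) '' ball2 ι)
    (t : ι → ℝ) :
    (∑ i, (b i - a i) / 2 * t i) ^ 2 ≤ ∑ i, t i ^ 2 * (A * Aᵀ) i i := by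
  have hε (ε : ι → Bool) : (∑ i, (b i - a i) / 2 * t i) ^ 2 ≤
      ∑ j, (∑ i, boolSign (ε i) * (t i * A i j)) ^ 2 := by
    obtain ⟨y, hy, hAy⟩ := exists_mem_ball2_mulVec_eq_of_box_subset hab hsub ε
    exact sq_sum_mul_le_of_mulVec_eq hy hAy t
  have havg : ∑ ε : ι → Bool, ∑ j, (∑ i, boolSign (ε i) * (t i * A i j)) ^ 2 =
      2 ^ Fintype.card ι * ∑ i, t i ^ 2 * (A * Aᵀ) i i := by
    simp_rw [sum_comm (γ := ι → Bool), sum_sq_sum_boolSign_mul, ← mul_sum,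
      mul_transpose_self_apply, mul_sum, mul_pow]
    rw [sum_comm]
  have hsum := sum_le_sum (s := Finset.univ) fun ε _ => hε ε
  rw [sum_const, card_univ, Fintype.card_fun, Fintype.card_bool, nsmul_eq_mul, havg] at hsum
  exact le_of_mul_le_mul_left (by exact_mod_cast hsum) (by positivity)

end Box

section Duality

variable {ι : Type*} [Fintype ι] {c D : ι → ℝ}

lemma eq_zero_of_forall_sq_sum_mul_le [DecidableEq ι]
    (h : ∀ t : ι → ℝ, (∑ i, c i * t i) ^ 2 ≤ ∑ i, t i ^ 2 * D i) {i : ι} (hi : D i = 0) :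
    c i = 0 := by
  have hci : c i ^ 2 ≤ 0 := by simpa [Pi.single_apply, hi] using h (Pi.single i 1)
  exact pow_eq_zero_iff two_ne_zero |>.mp (le_antisymm hci (sq_nonneg _))

lemma sum_sq_div_le_one_of_forall_sq_sum_mul_le
    (h : ∀ t : ι → ℝ, (∑ i, c i * t i) ^ 2 ≤ ∑ i, t i ^ 2 * D i) :
    ∑ i, c i ^ 2 / D i ≤ 1 := by
  have h' := h fun i => c i / D i
  have e1 : ∑ i, c i * (c i / D i) = ∑ i, c i ^ 2 / D i :=
    sum_congr rfl fun i _ => by ring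
  have e2 : ∑ i, (c i / D i) ^ 2 * D i = ∑ i, c i ^ 2 / D i := by
    refine sum_congr rfl fun i _ => ?_
    by_cases hi : D i = 0
    · simp [hi]
    · field_simp
  rw [e1, e2] at h'
  nlinarith

lemma rpow_sum_rpow_le_of_forall_sq_sum_mul_le [DecidableEq ι] {P Q : ℝ}
    (hPQ : Real.HolderTriple 2 P Q) (hc : ∀ i, 0 ≤ c i) (hD : ∀ i, 0 ≤ D i)
    (h : ∀ t : ι → ℝ, (∑ i, c i * t i) ^ 2 ≤ ∑ i, t i ^ 2 * D i) :
    (∑ i, c i ^ Q) ^ (1 / Q) ≤ (∑ i, D i ^ (P / 2)) ^ (1 / P) := by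
  obtain ⟨hP, hQ⟩ : 0 < P ∧ 0 < Q := ⟨hPQ.symm.pos, hPQ.pos'⟩
  have hfg (i : ι) : c i / √(D i) * √(D i) = c i := by
    by_cases hi : D i = 0
    · simp [eq_zero_of_forall_sq_sum_mul_le h hi]
    · exact div_mul_cancel₀ _ (Real.sqrt_ne_zero'.mpr ((hD i).lt_of_ne' hi))
  have holder := Real.Lr_rpow_le_Lp_mul_Lq_of_nonneg univ hPQ
    (f := fun i => c i / √(D i)) (g := fun i => √(D i))
    (fun i _ => div_nonneg (hc i) (Real.sqrt_nonneg _)) (fun i _ => Real.sqrt_nonneg _)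
  have hf (i : ι) : (c i / √(D i)) ^ (2 : ℝ) = c i ^ 2 / D i := by
    rw [Real.rpow_two, div_pow, Real.sq_sqrt (hD i)]
  have hg (i : ι) : √(D i) ^ P = D i ^ (P / 2) := by
    rw [Real.sqrt_eq_rpow, ← Real.rpow_mul (hD i), one_div_mul_eq_div]
  simp only [hfg, hf, hg] at holder
  have hDP : 0 ≤ ∑ i, D i ^ (P / 2) := sum_nonneg fun i _ => Real.rpow_nonneg (hD i) _
  have hsum_le : ∑ i, c i ^ Q ≤ (∑ i, D i ^ (P / 2)) ^ (Q / P) := by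
    refine holder.trans (mul_le_of_le_one_left (Real.rpow_nonneg hDP _) ?_)
    exact Real.rpow_le_one (sum_nonneg fun i _ => div_nonneg (sq_nonneg _) (hD i))
      (sum_sq_div_le_one_of_forall_sq_sum_mul_le h) (by positivity)
  calc (∑ i, c i ^ Q) ^ (1 / Q) ≤ ((∑ i, D i ^ (P / 2)) ^ (Q / P)) ^ (1 / Q) :=
        Real.rpow_le_rpow (sum_nonneg fun i _ => Real.rpow_nonneg (hc i) _) hsum_le
          (by positivity)
    _ = (∑ i, D i ^ (P / 2)) ^ (1 / P) := by
        rw [← Real.rpow_mul hDP]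
        congr 1
        field_simp

lemma sum_sq_le_iSup_of_forall_sq_sum_mul_le (hD : ∀ i, 0 ≤ D i)
    (h : ∀ t : ι → ℝ, (∑ i, c i * t i) ^ 2 ≤ ∑ i, t i ^ 2 * D i) :
    ∑ i, c i ^ 2 ≤ ⨆ i, D i := by
  have hM : 0 ≤ ⨆ i, D i := Real.iSup_nonneg hD
  have hcD : ∑ i, c i ^ 2 * D i ≤ (∑ i, c i ^ 2) * ⨆ i, D i := by
    rw [sum_mul]
    exact sum_le_sum fun i _ =>
      mul_le_mul_of_nonneg_left (le_ciSup (Set.finite_range D).bddAbove i) (sq_nonneg _)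
  have hcc := h c
  simp only [← sq] at hcc
  nlinarith [sum_nonneg fun i (_ : i ∈ Finset.univ) => sq_nonneg (c i)]

end Duality

section Containment

variable {ι : Type*} [Fintype ι] [DecidableEq ι]

lemma exists_box_subset_diagonal_ball2 {a b s : ι → ℝ}
    (hs : ∀ i, s i = 0 → a i = b i) (h : ∑ i, ((b i - a i) / 2) ^ 2 / s i ^ 2 ≤ 1) :
    ∃ v : ι → ℝ, (fun x => x + v) '' univ.pi (fun i => Icc (a i) (b i)) ⊆
      (diagonal s *ᵥ ·) '' ball2 ι := by
  refine ⟨fun i => -((a i + b i) / 2), ?_⟩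
  rintro _ ⟨x, hx, rfl⟩
  have hxi (i : ι) : (x i - (a i + b i) / 2) ^ 2 ≤ ((b i - a i) / 2) ^ 2 := by
    obtain ⟨hax, hxb⟩ := hx i (Set.mem_univ i)
    nlinarith
  refine ⟨fun i => (x i - (a i + b i) / 2) / s i, ?_, ?_⟩
  · calc ∑ i, ((x i - (a i + b i) / 2) / s i) ^ 2 ≤ ∑ i, ((b i - a i) / 2) ^ 2 / s i ^ 2 :=
          sum_le_sum fun i _ => by
            rw [div_pow]; exact div_le_div_of_nonneg_right (hxi i) (sq_nonneg _)
      _ ≤ 1 := h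
  · funext i
    simp only [mulVec_diagonal, Pi.add_apply]
    by_cases hi : s i = 0
    · obtain ⟨hax, hxb⟩ := hx i (Set.mem_univ i)
      have := hs i hi
      rw [hi, zero_mul]
      linarith
    · field_simp
      ring

end Containment

section Weights

variable {ι : Type*} [Fintype ι] {c : ι → ℝ} {Q : ℝ}

noncomputable def boxWeight (Q : ℝ) (c : ι → ℝ) (i : ι) : ℝ := (∑ j, c j ^ Q) * c i ^ (2 - Q)

lemma sum_sq_div_boxWeight_le_one (hc : ∀ i, 0 ≤ c i) (hQ : 0 < Q) :
    ∑ i, c i ^ 2 / boxWeight Q c i ≤ 1 := by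
  have hterm (i : ι) : c i ^ 2 / boxWeight Q c i = c i ^ Q / ∑ j, c j ^ Q := by
    unfold boxWeight
    rcases (hc i).eq_or_lt with hci | hci
    · simp [← hci, Real.zero_rpow hQ.ne']
    · rw [← Real.rpow_natCast, show ((2 : ℕ) : ℝ) = Q + (2 - Q) by push_cast; ring,
        Real.rpow_add hci, mul_div_mul_right _ _ (Real.rpow_pos_of_pos hci _).ne']
  rw [sum_congr rfl fun i _ => hterm i, ← sum_div]
  exact div_self_le_one _

lemma boxWeight_nonneg (hc : ∀ i, 0 ≤ c i) (i : ι) : 0 ≤ boxWeight Q c i :=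
  mul_nonneg (sum_nonneg fun j _ => Real.rpow_nonneg (hc j) _) (Real.rpow_nonneg (hc i) _)

lemma eq_zero_of_boxWeight_eq_zero (hc : ∀ i, 0 ≤ c i) (hQ : 0 < Q) {i : ι}
    (hi : boxWeight Q c i = 0) : c i = 0 := by
  rcases mul_eq_zero.mp hi with hN | hci
  · have := (sum_eq_zero_iff_of_nonneg fun j _ => Real.rpow_nonneg (hc j) Q).mp hN i (mem_univ i)
    exact (Real.rpow_eq_zero (hc i) hQ.ne').mp this
  · exact ((Real.rpow_eq_zero_iff_of_nonneg (hc i)).mp hci).1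

lemma rpow_sum_boxWeight_rpow {P : ℝ} (hPQ : Real.HolderTriple 2 P Q) (hc : ∀ i, 0 ≤ c i) :
    (∑ i, boxWeight Q c i ^ (P / 2)) ^ (1 / P) = (∑ i, c i ^ Q) ^ (1 / Q) := by
  obtain ⟨hP, hQ⟩ : 0 < P ∧ 0 < Q := ⟨hPQ.symm.pos, hPQ.pos'⟩
  have hinv : 2 * P = Q * P + 2 * Q := by
    have := hPQ.inv_add_inv_eq_inv
    field_simp at this
    linarith
  have hexp : (2 - Q) * (P / 2) = Q := by linear_combination hinv / 2
  set N := ∑ j, c j ^ Q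
  have hN : 0 ≤ N := sum_nonneg fun j _ => Real.rpow_nonneg (hc j) Q
  have hterm (i : ι) : (N * c i ^ (2 - Q)) ^ (P / 2) = N ^ (P / 2) * c i ^ Q := by
    rw [Real.mul_rpow hN (Real.rpow_nonneg (hc i) _), ← Real.rpow_mul (hc i), hexp]
  unfold boxWeight
  rw [sum_congr rfl fun i _ => hterm i, ← mul_sum,
    ← Real.rpow_add_one' hN (by positivity),
    ← Real.rpow_mul hN]
  congr 1
  field_simp
  linear_combination -hinv

end Weights

/-- The exponent `q` of the theorem, characterised by `1/q = 1/2 + 1/p`. At `p = ∞` it is `2`,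
because `(∞ : ℝ≥0∞).toReal = 0` and `(0 : ℝ)⁻¹ = 0`. -/
noncomputable def boxExponent (p : ℝ≥0∞) : ℝ := (2⁻¹ + p.toReal⁻¹)⁻¹

lemma boxExponent_top : boxExponent ∞ = 2 := by simp [boxExponent]

lemma boxExponent_pos (p : ℝ≥0∞) : 0 < boxExponent p := by
  unfold boxExponent; positivity

lemma one_div_boxExponent (p : ℝ≥0∞) : 1 / boxExponent p = 1 / 2 + 1 / p.toReal := by
  simp [boxExponent]

lemma holderTriple_boxExponent {p : ℝ≥0∞} (hp0 : p ≠ 0) (hp : p ≠ ∞) :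
    Real.HolderTriple 2 p.toReal (boxExponent p) :=
  .of_pos two_pos (ENNReal.toReal_pos hp0 hp)

lemma toReal_ite_eq_boxExponent {p : ℝ≥0∞} (hp0 : p ≠ 0) :
    (if p = ∞ then 2 else 2 * p / (p + 2)).toReal = boxExponent p := by
  split_ifs with hp
  · simp [hp, boxExponent_top]
  · have hP : 0 < p.toReal := ENNReal.toReal_pos hp0 hp
    rw [ENNReal.toReal_div, ENNReal.toReal_mul, ENNReal.toReal_add hp (by simp),
      ENNReal.toReal_ofNat, boxExponent]
    field_simp

section Trace

variable {ι : Type*} [Fintype ι]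

lemma sqrt_trp_half_of_ne_top {p : ℝ≥0∞} (hp : p ≠ ∞) (M : Matrix ι ι ℝ) :
    √(trp (p / 2) M) = (∑ i, |M i i| ^ (p.toReal / 2)) ^ (1 / p.toReal) := by
  have hp2 : p / 2 ≠ ∞ := ENNReal.div_ne_top hp two_ne_zero
  rw [trp, pnorm, if_neg hp2, ENNReal.toReal_div, ENNReal.toReal_ofNat, Real.sqrt_eq_rpow,
    ← Real.rpow_mul (sum_nonneg fun i _ => by positivity)]
  congr 1
  ring

lemma trp_top_div_two (M : Matrix ι ι ℝ) : trp (∞ / 2) M = ⨆ i, |M i i| := by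
  rw [ENNReal.top_div_of_ne_top ENNReal.ofNat_ne_top, trp, pnorm, if_pos rfl]

end Trace

section GammaBox

variable {ι : Type*} [Fintype ι] [DecidableEq ι] {p : ℝ≥0∞} {c : ι → ℝ}

lemma sqrt_trp_diagonal_boxWeight (hp : 2 ≤ p) (hc : ∀ i, 0 ≤ c i) :
    √(trp (p / 2) (diagonal (boxWeight (boxExponent p) c))) =
      (∑ i, c i ^ boxExponent p) ^ (1 / boxExponent p) := by
  by_cases hp_top : p = ∞
  · subst hp_top
    have hN : 0 ≤ ∑ j, c j ^ (2 : ℝ) := sum_nonneg fun j _ => Real.rpow_nonneg (hc j) _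
    simp only [trp_top_div_two, diagonal_apply_eq, boxWeight, boxExponent_top, sub_self,
      Real.rpow_zero, mul_one, abs_of_nonneg hN, ← Real.sqrt_eq_rpow]
    rcases isEmpty_or_nonempty ι with hι | hι
    · simp
    · rw [ciSup_const]
  · have hp0 : p ≠ 0 := (two_pos.trans_le hp).ne'
    rw [sqrt_trp_half_of_ne_top hp_top]
    simp only [diagonal_apply_eq, abs_of_nonneg (boxWeight_nonneg hc _)]
    exact rpow_sum_boxWeight_rpow (holderTriple_boxExponent hp0 hp_top) hc

lemma rpow_sum_rpow_le_sqrt_trp (hp : 2 ≤ p) (hc : ∀ i, 0 ≤ c i) {A : Matrix ι ι ℝ}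
    (h : ∀ t : ι → ℝ, (∑ i, c i * t i) ^ 2 ≤ ∑ i, t i ^ 2 * (A * Aᵀ) i i) :
    (∑ i, c i ^ boxExponent p) ^ (1 / boxExponent p) ≤ √(trp (p / 2) (A * Aᵀ)) := by
  have hD (i : ι) : 0 ≤ (A * Aᵀ) i i := by
    rw [mul_transpose_self_apply]; positivity
  by_cases hp_top : p = ∞
  · subst hp_top
    simp only [trp_top_div_two, boxExponent_top, abs_of_nonneg (hD _), ← Real.sqrt_eq_rpow,
      Real.rpow_two]
    exact Real.sqrt_le_sqrt (sum_sq_le_iSup_of_forall_sq_sum_mul_le hD h)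
  · have hp0 : p ≠ 0 := (two_pos.trans_le hp).ne'
    rw [sqrt_trp_half_of_ne_top hp_top]
    simp only [abs_of_nonneg (hD _)]
    exact rpow_sum_rpow_le_of_forall_sq_sum_mul_le (holderTriple_boxExponent hp0 hp_top) hc hD h

theorem Gamma_box_eq_rpow_sum (hp : 2 ≤ p) {a b : ι → ℝ} (hab : ∀ i, a i ≤ b i) :
    Gamma p (univ.pi fun i => Icc (a i) (b i)) =
      (∑ i, ((b i - a i) / 2) ^ boxExponent p) ^ (1 / boxExponent p) := by
  have hc (i : ι) : 0 ≤ (b i - a i) / 2 := by linarith [hab i]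
  set w := boxWeight (boxExponent p) fun i => (b i - a i) / 2
  have hw : ∀ i, 0 ≤ w i := boxWeight_nonneg hc
  have hdiag : diagonal (fun i => √(w i)) * (diagonal fun i => √(w i))ᵀ = diagonal w := by
    rw [diagonal_transpose, diagonal_mul_diagonal]
    simp only [Real.mul_self_sqrt (hw _)]
  refine IsLeast.csInf_eq ⟨⟨diagonal fun i => √(w i), ?_, ?_⟩, ?_⟩
  · rw [hdiag, sqrt_trp_diagonal_boxWeight hp hc]
  · refine exists_box_subset_diagonal_ball2 (fun i hi => ?_) ?_
    · have := eq_zero_of_boxWeight_eq_zero hc (boxExponent_pos p)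
        ((Real.sqrt_eq_zero (hw i)).mp hi)
      linarith
    · simpa only [Real.sq_sqrt (hw _)] using sum_sq_div_boxWeight_le_one hc (boxExponent_pos p)
  · rintro r ⟨A, rfl, v, hsub⟩
    exact rpow_sum_rpow_le_sqrt_trp hp hc (sq_sum_mul_le_of_box_subset hab hsub)

end GammaBox

section Norms

variable {ι : Type*} [Fintype ι]

lemma half_mul_pnorm_sub {q : ℝ≥0∞} (hq : 0 < q.toReal) {a b : ι → ℝ} (hab : ∀ i, a i ≤ b i) :
    1 / 2 * pnorm q (b - a) = (∑ i, ((b i - a i) / 2) ^ q.toReal) ^ (1 / q.toReal) := by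
  have hba (i : ι) : 0 ≤ b i - a i := sub_nonneg.mpr (hab i)
  have hsum : 0 ≤ ∑ i, (b i - a i) ^ q.toReal := sum_nonneg fun i _ => Real.rpow_nonneg (hba i) _
  rw [pnorm, if_neg (ENNReal.toReal_pos_iff.mp hq).2.ne]
  simp only [Pi.sub_apply, abs_of_nonneg (hba _), Real.div_rpow (hba _) zero_le_two, ← sum_div]
  rw [Real.div_rpow hsum (by positivity), ← Real.rpow_mul zero_le_two, mul_one_div_cancel hq.ne',
    Real.rpow_one]
  ring

lemma rpow_sum_const_rpow {x Q : ℝ} (hx : 0 ≤ x) (hQ : Q ≠ 0) :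
    (∑ _ : ι, x ^ Q) ^ (1 / Q) = (Fintype.card ι : ℝ) ^ (1 / Q) * x := by
  rw [sum_const, card_univ, nsmul_eq_mul, Real.mul_rpow (by positivity) (Real.rpow_nonneg hx _),
    ← Real.rpow_mul hx, mul_one_div_cancel hQ, Real.rpow_one]

end Norms

/-- `Γ_p` of a box equals `(1/2)·‖b - a‖_q` with `q = 2p/(p+2)`
for `p ∈ [2,∞)` and `q = 2` for `p = ∞`; in particular
`Γ_p([a,b]^d) = d^{1/2 + 1/p}(b-a)/2` for `p ∈ [2,∞)`. -/
theorem Gamma_box {d : ℕ} (p : ℝ≥0∞) (hp : 2 ≤ p) (a b : Fin d → ℝ)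
    (hab : ∀ i, a i ≤ b i) :
    Gamma p (Set.univ.pi fun i => Set.Icc (a i) (b i)) =
      (1 / 2) * pnorm (if p = ∞ then 2 else 2 * p / (p + 2)) (b - a) ∧
    (∀ c e : ℝ, c ≤ e → p ≠ ∞ →
      Gamma p (Set.univ.pi fun _ : Fin d => Set.Icc c e) =
        (d : ℝ) ^ ((1 : ℝ) / 2 + 1 / p.toReal) * (e - c) / 2) := by
  have hq := toReal_ite_eq_boxExponent (two_pos.trans_le hp).ne'
  refine ⟨?_, fun c e hce _ => ?_⟩
  · rw [half_mul_pnorm_sub (hq ▸ boxExponent_pos p) hab, hq]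
    exact Gamma_box_eq_rpow_sum hp hab
  · rw [Gamma_box_eq_rpow_sum hp fun _ => hce,
      rpow_sum_const_rpow (by linarith) (boxExponent_pos p).ne', Fintype.card_fin,
      one_div_boxExponent]
    ring
end

section
/- Product formula for Γ₂: for bounded sets K₁ ⊆ ℝ^{d₁} and K₂ ⊆ ℝ^{d₂}, Γ₂(K₁ × K₂) = Γ₂(K₁) + Γ₂(K₂), where K₁ × K₂ := {(x,y) : x ∈ K₁, y ∈ K₂} ⊆ ℝ^{d₁+d₂}. -/
open scoped ENNReal
open MeasureTheory ProbabilityTheory Matrix Set Bornology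

/-!
Upper bound: if translates of `K₁` and `K₂` lie in `A₁ B₂` and `A₂ B₂`, then a translate of
`K₁ × K₂` lies in `M B₂` for the block-diagonal `M` with blocks `A₁ / √θ` and `A₂ / √(1 - θ)`,
since `‖(√θ u₁, √(1 - θ) u₂)‖ ≤ 1`. The choice `θ = a₁ / (a₁ + a₂)`, with `aᵢ` the Frobenius norm
of `Aᵢ`, gives Frobenius norm `a₁ + a₂`.

Lower bound: let a translate of `K₁ × K₂` lie in `G B₂` with `G` invertible (any covering matrix
`A` can be replaced by `(A Aᵀ + ε)^{1/2}`). In the coordinates given by `G⁻¹` the two factors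
become sets `S` and `T` with `S + T` inside the unit ball. Their circumradii satisfy
`ρ₁² + ρ₂² ≤ 1`: about its Chebyshev centre, `S` carries discrete probability measures whose
variance is almost `ρ₁²` (the centre lies in the closed convex hull of the almost farthest points),
likewise for `T`, and under the product measure the variance of `a + b` is the sum of the two
variances and at most `E ‖a + b‖² ≤ 1`. Mapping back by the two row blocks `G₁`, `G₂` of `G`
covers `Kᵢ` by `ρᵢ Gᵢ`, and Cauchy–Schwarz gives `ρ₁ ‖G₁‖ + ρ₂ ‖G₂‖ ≤ ‖G‖`.
-/

lemma le_apply_zero_of_forall_pos_le {g : ℝ → ℝ} (hg : Continuous g) {x : ℝ}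
    (h : ∀ ε > 0, x ≤ g ε) : x ≤ g 0 :=
  ge_of_tendsto (hg.tendsto 0 |>.mono_left nhdsWithin_le_nhds)
    (eventually_nhdsWithin_of_forall (s := Ioi 0) h)

lemma mul_sqrt_add_mul_sqrt_le {ρ₁ ρ₂ f₁ f₂ : ℝ} (hρ : ρ₁ ^ 2 + ρ₂ ^ 2 ≤ 1) (hf₁ : 0 ≤ f₁)
    (hf₂ : 0 ≤ f₂) : ρ₁ * √f₁ + ρ₂ * √f₂ ≤ √(f₁ + f₂) := by
  apply Real.le_sqrt_of_sq_le
  have e₁ := Real.sq_sqrt hf₁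
  have e₂ := Real.sq_sqrt hf₂
  nlinarith [sq_nonneg (ρ₁ * √f₂ - ρ₂ * √f₁), mul_le_mul_of_nonneg_right hρ
    (add_nonneg (sq_nonneg √f₁) (sq_nonneg √f₂))]

lemma sqrt_div_mul_add_div_mul_le {a₁ a₂ f₁ f₂ : ℝ} (ha₁ : 0 < a₁) (ha₂ : 0 < a₂)
    (hf₁ : f₁ ≤ a₁ ^ 2) (hf₂ : f₂ ≤ a₂ ^ 2) :
    √((a₁ + a₂) / a₁ * f₁ + (a₁ + a₂) / a₂ * f₂) ≤ a₁ + a₂ := by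
  rw [Real.sqrt_le_left (by positivity)]
  have e₁ : (a₁ + a₂) / a₁ * f₁ ≤ (a₁ + a₂) * a₁ := by
    rw [div_mul_eq_mul_div, div_le_iff₀ ha₁]; nlinarith
  have e₂ : (a₁ + a₂) / a₂ * f₂ ≤ (a₁ + a₂) * a₂ := by
    rw [div_mul_eq_mul_div, div_le_iff₀ ha₂]; nlinarith
  nlinarith

lemma submatrix_mul_inv_submatrix {ι ι' : Type*} [Fintype ι] [DecidableEq ι] [DecidableEq ι']
    {G : Matrix ι ι ℝ} (hG : IsUnit G.det) {e : ι' → ι} (he : Function.Injective e) :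
    G.submatrix e id * G⁻¹.submatrix id e = 1 := by
  rw [← submatrix_mul _ _ _ _ _ Function.bijective_id, mul_nonsing_inv _ hG, submatrix_one _ he]

section RegSqrt

open scoped MatrixOrder

variable {ι κ : Type*} [Fintype ι] [Fintype κ]

lemma norm_toLp_sq_eq_dotProduct (u : ι → ℝ) : ‖WithLp.toLp 2 u‖ ^ 2 = u ⬝ᵥ u := by
  rw [EuclideanSpace.real_norm_sq_eq]
  simp [dotProduct, sq]

lemma inner_toLp_eq_dotProduct (u u' : ι → ℝ) :
    inner ℝ (WithLp.toLp 2 u) (WithLp.toLp 2 u') = u ⬝ᵥ u' := by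
  simp [EuclideanSpace.inner_toLp_toLp, dotProduct_comm]

lemma sum_sq_eq_trace_mul_transpose (N : Matrix ι κ ℝ) :
    ∑ i, ∑ k, N i k ^ 2 = (N * Nᵀ).trace := by
  simp [trace, mul_apply, sq]

variable [DecidableEq ι]

/-- A regularised square root of `M Mᵀ`: for `ε > 0` it is invertible and its image of the unit
ball contains that of `M`. -/
noncomputable def regSqrt (M : Matrix ι κ ℝ) (ε : ℝ) : Matrix ι ι ℝ :=
  CFC.sqrt (M * Mᵀ + ε • 1)

variable (M : Matrix ι κ ℝ) {ε : ℝ}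

lemma posSemidef_mul_transpose_add_smul (hε : 0 ≤ ε) : (M * Mᵀ + ε • 1).PosSemidef := by
  simpa [conjTranspose_eq_transpose_of_trivial] using
    (posSemidef_self_mul_conjTranspose M).add (PosSemidef.one.smul hε)

lemma posDef_mul_transpose_add_smul (hε : 0 < ε) : (M * Mᵀ + ε • 1).PosDef := by
  rw [add_comm]
  simpa [conjTranspose_eq_transpose_of_trivial] using
    (PosDef.one.smul hε).add_posSemidef (posSemidef_self_mul_conjTranspose M)

lemma regSqrt_transpose : (regSqrt M ε)ᵀ = regSqrt M ε := by
  rw [← conjTranspose_eq_transpose_of_trivial]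
  exact (CFC.sqrt_nonneg _).posSemidef.isHermitian

lemma regSqrt_mul_self (hε : 0 ≤ ε) : regSqrt M ε * regSqrt M ε = M * Mᵀ + ε • 1 :=
  CFC.sqrt_mul_sqrt_self _ (posSemidef_mul_transpose_add_smul M hε).nonneg

lemma isUnit_regSqrt (hε : 0 < ε) : IsUnit (regSqrt M ε) :=
  (posDef_mul_transpose_add_smul M hε).isStrictlyPositive.sqrt.isUnit

lemma sum_sq_regSqrt (hε : 0 ≤ ε) :
    ∑ i, ∑ j, regSqrt M ε i j ^ 2 = ∑ i, ∑ k, M i k ^ 2 + ε * Fintype.card ι := by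
  rw [sum_sq_eq_trace_mul_transpose, regSqrt_transpose, regSqrt_mul_self M hε, trace_add,
    trace_smul, trace_one, sum_sq_eq_trace_mul_transpose, smul_eq_mul]

/-- With `y = G⁻¹ M u` and `w = G⁻¹ y` one has `‖y‖² = ⟪Mᵀ w, u⟫` and
`‖y‖² = ‖Mᵀ w‖² + ε ‖w‖²`, so Cauchy–Schwarz gives `‖y‖ ≤ ‖u‖`. -/
lemma norm_inv_regSqrt_mulVec_le (hε : 0 < ε) (u : κ → ℝ) :
    ‖WithLp.toLp 2 ((regSqrt M ε)⁻¹ *ᵥ (M *ᵥ u))‖ ≤ ‖WithLp.toLp 2 u‖ := by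
  set G := regSqrt M ε
  have hG : IsUnit G.det := (isUnit_iff_isUnit_det G).1 (isUnit_regSqrt M hε)
  have hsym : ∀ p q, p ⬝ᵥ (G *ᵥ q) = (G *ᵥ p) ⬝ᵥ q := fun p q => by
    rw [dotProduct_mulVec, ← mulVec_transpose, regSqrt_transpose]
  set y := G⁻¹ *ᵥ (M *ᵥ u)
  set w := G⁻¹ *ᵥ y
  have hGw : G *ᵥ w = y := by simp [w, mulVec_mulVec, mul_nonsing_inv G hG]
  have hGy : G *ᵥ y = M *ᵥ u := by
    simp only [y, mulVec_mulVec, ← Matrix.mul_assoc, mul_nonsing_inv G hG, Matrix.one_mul]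
  have hyu : y ⬝ᵥ y = (Mᵀ *ᵥ w) ⬝ᵥ u := by
    rw [← hGw, hsym, hGw, hGy, dotProduct_comm, dotProduct_mulVec, mulVec_transpose]
  have hyw : y ⬝ᵥ y = (Mᵀ *ᵥ w) ⬝ᵥ (Mᵀ *ᵥ w) + ε * (w ⬝ᵥ w) := by
    rw [← hGw, ← hsym, mulVec_mulVec, regSqrt_mul_self M hε.le, add_mulVec, dotProduct_add,
      ← mulVec_mulVec, dotProduct_mulVec, ← mulVec_transpose, smul_mulVec, one_mulVec,
      dotProduct_smul, smul_eq_mul]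
  have hcs := real_inner_le_norm (WithLp.toLp 2 (Mᵀ *ᵥ w)) (WithLp.toLp 2 u)
  rw [inner_toLp_eq_dotProduct, ← hyu, ← norm_toLp_sq_eq_dotProduct] at hcs
  have hw : ‖WithLp.toLp 2 (Mᵀ *ᵥ w)‖ ^ 2 ≤ ‖WithLp.toLp 2 y‖ ^ 2 := by
    rw [norm_toLp_sq_eq_dotProduct, norm_toLp_sq_eq_dotProduct, hyw]
    nlinarith [norm_toLp_sq_eq_dotProduct w ▸ sq_nonneg ‖WithLp.toLp 2 w‖]
  rw [pow_le_pow_iff_left₀ (norm_nonneg _) (norm_nonneg _) two_ne_zero] at hw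
  nlinarith [mul_le_mul_of_nonneg_right hw (norm_nonneg (WithLp.toLp 2 u)),
    norm_nonneg (WithLp.toLp 2 u)]

end RegSqrt

def Covers {ι κ : Type*} [Fintype κ] (M : Matrix ι κ ℝ) (K : Set (ι → ℝ)) : Prop :=
  ∃ v : ι → ℝ, ∀ x ∈ K, ∃ u : κ → ℝ, ‖WithLp.toLp 2 u‖ ≤ 1 ∧ M *ᵥ u = x + v

section Covers

variable {ι κ : Type*} [Fintype κ] {K : Set (ι → ℝ)}

lemma mem_ball2_iff_norm_le_s16 (u : κ → ℝ) : u ∈ ball2 κ ↔ ‖WithLp.toLp 2 u‖ ≤ 1 := by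
  rw [← sq_le_one_iff₀ (norm_nonneg _), EuclideanSpace.real_norm_sq_eq]
  rfl

lemma Covers.smul_of_norm_le {M : Matrix ι κ ℝ} {ρ : ℝ} {v : ι → ℝ}
    (h : ∀ x ∈ K, ∃ u : κ → ℝ, ‖WithLp.toLp 2 u‖ ≤ ρ ∧ M *ᵥ u = x + v) :
    Covers (ρ • M) K := by
  refine ⟨v, fun x hx => ?_⟩
  obtain ⟨u, hu, hMu⟩ := h x hx
  rcases eq_or_ne ρ 0 with rfl | hρ
  · have hu0 : u = 0 := by simpa using hu
    exact ⟨0, by simp, by rw [← hMu, hu0, mulVec_zero, mulVec_zero]⟩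
  refine ⟨ρ⁻¹ • u, ?_, ?_⟩
  · rw [WithLp.toLp_smul, norm_smul, norm_inv, Real.norm_eq_abs]
    exact inv_mul_le_one_of_le₀ (hu.trans (le_abs_self ρ)) (abs_nonneg ρ)
  · rw [smul_mulVec, mulVec_smul, smul_smul, mul_inv_cancel₀ hρ, one_smul, hMu]

variable [Fintype ι] [DecidableEq ι]

lemma Gamma_two_eq_sInf (K : Set (ι → ℝ)) :
    Gamma 2 K = sInf ((fun A : Matrix ι ι ℝ => √(∑ i, ∑ j, A i j ^ 2)) '' {A | Covers A K}) := by
  have h2 : (2 : ℝ≥0∞) / 2 = 1 := ENNReal.div_self two_ne_zero ENNReal.ofNat_ne_top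
  have htrp : ∀ A : Matrix ι ι ℝ, trp 1 (A * Aᵀ) = ∑ i, ∑ j, A i j ^ 2 := fun A => by
    simp only [trp, pnorm, ENNReal.one_ne_top, if_false, ENNReal.toReal_one, Real.rpow_one,
      div_one, mul_apply, transpose_apply, ← sq]
    exact Finset.sum_congr rfl fun i _ => abs_of_nonneg (Finset.sum_nonneg fun j _ => sq_nonneg _)
  simp only [Gamma, h2, htrp]
  congr 1
  ext r
  simp only [mem_ofPred_eq, mem_image, Covers, subset_def, mem_ball2_iff_norm_le_s16,
    forall_exists_index, and_imp, forall_apply_eq_imp_iff₂]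
  exact exists_congr fun A => by rw [and_comm, eq_comm]

lemma Gamma_two_le_of_covers_square {A : Matrix ι ι ℝ} (h : Covers A K) :
    Gamma 2 K ≤ √(∑ i, ∑ j, A i j ^ 2) := by
  rw [Gamma_two_eq_sInf]
  exact csInf_le ⟨0, by rintro _ ⟨_, _, rfl⟩; positivity⟩ ⟨A, h, rfl⟩

lemma exists_covers_of_isBounded (hK : IsBounded K) : ∃ A : Matrix ι ι ℝ, Covers A K := by
  obtain ⟨R, hR⟩ := (PiLp.lipschitzWith_toLp 2 _).isBounded_image hK |>.exists_norm_le
  exact ⟨R • 1, Covers.smul_of_norm_le (v := 0) fun x hx =>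
    ⟨x, hR _ ⟨x, hx, rfl⟩, by rw [one_mulVec, add_zero]⟩⟩

lemma exists_covers_lt (hK : IsBounded K) {r : ℝ} (h : Gamma 2 K < r) :
    ∃ A : Matrix ι ι ℝ, Covers A K ∧ √(∑ i, ∑ j, A i j ^ 2) < r := by
  rw [Gamma_two_eq_sInf] at h
  obtain ⟨A, hA⟩ := exists_covers_of_isBounded hK
  obtain ⟨_, ⟨A, hA, rfl⟩, hlt⟩ := exists_lt_of_csInf_lt (Nonempty.image _ ⟨A, hA⟩) h
  exact ⟨A, hA, hlt⟩

lemma le_Gamma_two (hK : IsBounded K) {r : ℝ}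
    (h : ∀ A : Matrix ι ι ℝ, Covers A K → r ≤ √(∑ i, ∑ j, A i j ^ 2)) : r ≤ Gamma 2 K := by
  rw [Gamma_two_eq_sInf]
  obtain ⟨A, hA⟩ := exists_covers_of_isBounded hK
  exact le_csInf ⟨_, A, hA, rfl⟩ (by rintro _ ⟨A, hA, rfl⟩; exact h A hA)

lemma covers_regSqrt {M : Matrix ι κ ℝ} (h : Covers M K) {ε : ℝ} (hε : 0 < ε) :
    Covers (regSqrt M ε) K := by
  obtain ⟨v, hv⟩ := h
  refine ⟨v, fun x hx => ?_⟩
  obtain ⟨u, hu, hMu⟩ := hv x hx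
  have hG := (isUnit_iff_isUnit_det _).1 (isUnit_regSqrt M hε)
  refine ⟨(regSqrt M ε)⁻¹ *ᵥ (M *ᵥ u), (norm_inv_regSqrt_mulVec_le M hε u).trans hu, ?_⟩
  rw [mulVec_mulVec, mul_nonsing_inv _ hG, one_mulVec, hMu]

lemma Gamma_two_le_of_covers {M : Matrix ι κ ℝ} (h : Covers M K) :
    Gamma 2 K ≤ √(∑ i, ∑ k, M i k ^ 2) := by
  have key : ∀ ε > 0, Gamma 2 K ≤ √(∑ i, ∑ k, M i k ^ 2 + ε * Fintype.card ι) := fun ε hε =>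
    sum_sq_regSqrt M hε.le ▸ Gamma_two_le_of_covers_square (covers_regSqrt h hε)
  simpa using le_apply_zero_of_forall_pos_le (by fun_prop) key

lemma Gamma_two_le_of_leftInverse {C : Matrix κ ι ℝ} {D : Matrix ι κ ℝ} (hDC : D * C = 1)
    {v : ι → ℝ} {c : EuclideanSpace ℝ κ} {ρ : ℝ} (hρ : 0 ≤ ρ)
    (hc : c ∈ closure (convexHull ℝ ((fun x => WithLp.toLp 2 (C *ᵥ (x + v))) '' K)))
    (h : ∀ x ∈ K, ‖WithLp.toLp 2 (C *ᵥ (x + v)) - c‖ ≤ ρ) :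
    Gamma 2 K ≤ ρ * √(∑ i, ∑ k, D i k ^ 2) := by
  set L : (ι → ℝ) →ₗ[ℝ] EuclideanSpace ℝ κ :=
    (WithLp.linearEquiv 2 ℝ (κ → ℝ)).symm.toLinearMap ∘ₗ C.mulVecLin
  have hcL : c ∈ LinearMap.range L :=
    closure_minimal (convexHull_min (by rintro _ ⟨x, -, rfl⟩; exact ⟨x + v, rfl⟩)
      (LinearMap.range L).convex) (Submodule.closed_of_finiteDimensional _) hc
  obtain ⟨w, rfl⟩ := hcL
  have hcov : Covers (ρ • D) K := Covers.smul_of_norm_le (v := v - w) fun x hx =>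
    ⟨C *ᵥ (x + v - w), by simpa [L, mulVec_sub] using h x hx,
      by rw [mulVec_mulVec, hDC, one_mulVec, add_sub_assoc]⟩
  calc Gamma 2 K ≤ √(∑ i, ∑ k, (ρ • D) i k ^ 2) := Gamma_two_le_of_covers hcov
    _ = ρ * √(∑ i, ∑ k, D i k ^ 2) := by
      simp only [Matrix.smul_apply, smul_eq_mul, mul_pow, ← Finset.mul_sum]
      rw [Real.sqrt_mul (sq_nonneg ρ), Real.sqrt_sq hρ]

end Covers

noncomputable def supDist {E : Type*} [NormedAddCommGroup E] (S : Set E) (c : E) : ℝ :=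
  sSup ((‖· - c‖) '' S)

section Circumradius

open RealInnerProductSpace

variable {E : Type*} [NormedAddCommGroup E] {S : Set E}

lemma norm_sub_le_supDist (hb : IsBounded S) {a : E} (ha : a ∈ S) (c : E) :
    ‖a - c‖ ≤ supDist S c := by
  obtain ⟨R, hR⟩ := hb.subset_closedBall c
  exact le_csSup ⟨R, by rintro _ ⟨b, hb, rfl⟩; simpa [dist_eq_norm] using hR hb⟩ ⟨a, ha, rfl⟩

lemma supDist_le (hne : S.Nonempty) {c : E} {m : ℝ} (h : ∀ a ∈ S, ‖a - c‖ ≤ m) :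
    supDist S c ≤ m :=
  csSup_le (hne.image _) (by rintro _ ⟨a, ha, rfl⟩; exact h a ha)

lemma supDist_nonneg (hne : S.Nonempty) (hb : IsBounded S) (c : E) : 0 ≤ supDist S c :=
  let ⟨_, ha⟩ := hne
  (norm_nonneg _).trans (norm_sub_le_supDist hb ha c)

lemma lipschitzWith_supDist (hne : S.Nonempty) (hb : IsBounded S) :
    LipschitzWith 1 (supDist S) :=
  LipschitzWith.of_le_add fun c c' => supDist_le hne fun a ha =>
    calc ‖a - c‖ ≤ ‖a - c'‖ + ‖c' - c‖ := norm_sub_le_norm_sub_add_norm_sub a c' c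
      _ ≤ supDist S c' + dist c c' := by
        rw [dist_eq_norm']
        exact add_le_add_left (norm_sub_le_supDist hb ha c') _

lemma exists_forall_supDist_le [ProperSpace E] (hne : S.Nonempty) (hb : IsBounded S) :
    ∃ c, ∀ c', supDist S c ≤ supDist S c' := by
  obtain ⟨a, ha⟩ := hne
  refine (lipschitzWith_supDist ⟨a, ha⟩ hb).continuous.exists_forall_le <|
    Filter.tendsto_atTop_mono (fun c => ?_)
      (Filter.tendsto_atTop_add_const_right _ (-‖a‖) tendsto_norm_cocompact_atTop)
  calc ‖c‖ + -‖a‖ ≤ ‖a - c‖ := by rw [norm_sub_rev]; linarith [norm_sub_norm_le c a]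
    _ ≤ supDist S c := norm_sub_le_supDist hb ha c

variable [InnerProductSpace ℝ E]

/-- Moving `c` by `t • y` lowers the squared distance to the almost farthest points by at least
`t g`, and moves the others by at most `ε / 2`. -/
lemma exists_supDist_lt (hne : S.Nonempty) (hb : IsBounded S) {c y : E} {ε g : ℝ}
    (hε : 0 < ε) (hg : 0 < g) (hy : ∀ a ∈ S, supDist S c - ε < ‖a - c‖ → g ≤ ⟪y, a - c⟫) :
    ∃ c', supDist S c' < supDist S c := by
  set r := supDist S c
  obtain ⟨_, ⟨a₀, ha₀, rfl⟩, hfar₀⟩ :=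
    exists_lt_of_lt_csSup (hne.image (‖· - c‖)) (sub_lt_self r hε)
  have hga₀ : g ≤ ‖y‖ * ‖a₀ - c‖ := (hy a₀ ha₀ hfar₀).trans (real_inner_le_norm y _)
  have hy₀ : 0 < ‖y‖ := by
    by_contra! h
    nlinarith [norm_nonneg y, norm_nonneg (a₀ - c)]
  have hr : 0 < r := by
    have : 0 < ‖a₀ - c‖ := by
      by_contra! h
      nlinarith [norm_nonneg (a₀ - c)]
    exact this.trans_le (norm_sub_le_supDist hb ha₀ c)
  set t := min (g / ‖y‖ ^ 2) (ε / (2 * ‖y‖))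
  have ht : 0 < t := lt_min (by positivity) (by positivity)
  have ht₁ : t * ‖y‖ ^ 2 ≤ g := (le_div_iff₀ (by positivity)).1 (min_le_left _ _)
  have ht₂ : t * ‖y‖ ≤ ε / 2 := by
    have := (le_div_iff₀ (by positivity)).1 (min_le_right (g / ‖y‖ ^ 2) (ε / (2 * ‖y‖)))
    linarith
  refine ⟨c + t • y,
    (supDist_le hne (m := max √(r ^ 2 - t * g) (r - ε / 2)) fun a ha => ?_).trans_lt
      (max_lt ((Real.sqrt_lt' hr).2 (by nlinarith)) (by linarith))⟩
  have hac : ‖a - c‖ ≤ r := norm_sub_le_supDist hb ha c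
  have hsub : a - (c + t • y) = (a - c) - t • y := by abel
  by_cases hfar : r - ε < ‖a - c‖
  · refine le_max_of_le_left (Real.le_sqrt_of_sq_le ?_)
    rw [hsub, norm_sub_sq_real, inner_smul_right, norm_smul, Real.norm_of_nonneg ht.le,
      real_inner_comm]
    nlinarith [hy a ha hfar, norm_nonneg (a - c)]
  · refine le_max_of_le_right ?_
    calc ‖a - (c + t • y)‖ ≤ ‖a - c‖ + ‖t • y‖ := hsub ▸ norm_sub_le _ _
      _ ≤ r - ε / 2 := by rw [norm_smul, Real.norm_of_nonneg ht.le]; linarith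

lemma mem_closure_convexHull_far [FiniteDimensional ℝ E] (hne : S.Nonempty) (hb : IsBounded S)
    {c : E} (hmin : ∀ c', supDist S c ≤ supDist S c') {ε : ℝ} (hε : 0 < ε) :
    c ∈ closure (convexHull ℝ {a ∈ S | supDist S c - ε < ‖a - c‖}) := by
  by_contra hc
  obtain ⟨f, u, hfc, hfu⟩ :=
    geometric_hahn_banach_point_closed (convex_convexHull ℝ _).closure isClosed_closure hc
  obtain ⟨c', hc'⟩ := exists_supDist_lt hne hb hε (sub_pos.2 hfc)
    (y := (InnerProductSpace.toDual ℝ E).symm f) fun a ha hfar => by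
      rw [inner_sub_right, InnerProductSpace.toDual_symm_apply,
        InnerProductSpace.toDual_symm_apply]
      linarith [hfu a (subset_closure (subset_convexHull ℝ _ ⟨ha, hfar⟩))]
  exact (hmin c').not_gt hc'

lemma sum_mul_norm_sub_sq {ι : Type*} [Fintype ι] {w : ι → ℝ} (hw : ∑ i, w i = 1) (z : ι → E)
    (c : E) : ∑ i, w i * ‖z i - c‖ ^ 2 =
      ∑ i, w i * ‖z i - ∑ j, w j • z j‖ ^ 2 + ‖∑ j, w j • z j - c‖ ^ 2 := by
  set m := ∑ j, w j • z j
  have hcross : ∑ i, w i * ⟪z i - m, m - c⟫ = 0 := by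
    simp_rw [← real_inner_smul_left, ← sum_inner, smul_sub, Finset.sum_sub_distrib,
      ← Finset.sum_smul, hw, one_smul, m, sub_self, inner_zero_left]
  calc ∑ i, w i * ‖z i - c‖ ^ 2
      = ∑ i, (w i * ‖z i - m‖ ^ 2 + 2 * (w i * ⟪z i - m, m - c⟫) + w i * ‖m - c‖ ^ 2) :=
        Finset.sum_congr rfl fun i _ => by
          rw [← sub_add_sub_cancel (z i) m c, norm_add_sq_real]; ring
    _ = _ := by
      rw [Finset.sum_add_distrib, Finset.sum_add_distrib, ← Finset.mul_sum, hcross,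
        ← Finset.sum_mul, hw]
      ring

/-- Under the product measure, `a + b` has variance `Var a + Var b`, which is at most
`E ‖a + b‖² ≤ 1`. -/
lemma variance_add_variance_le_one {ι κ : Type*} [Fintype ι] [Fintype κ] {w : ι → ℝ}
    {ω : κ → ℝ} (hw₀ : ∀ i, 0 ≤ w i) (hw : ∑ i, w i = 1) (hω₀ : ∀ j, 0 ≤ ω j)
    (hω : ∑ j, ω j = 1) {a : ι → E} {b : κ → E} (hab : ∀ i j, ‖a i + b j‖ ≤ 1) :
    ∑ i, w i * ‖a i - ∑ k, w k • a k‖ ^ 2 + ∑ j, ω j * ‖b j - ∑ k, ω k • b k‖ ^ 2 ≤ 1 := by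
  set ma := ∑ k, w k • a k
  set mb := ∑ k, ω k • b k
  set Vb := ∑ j, ω j * ‖b j - mb‖ ^ 2
  have hrow : ∀ i, Vb + ‖a i + mb‖ ^ 2 ≤ 1 := fun i => by
    have h := sum_mul_norm_sub_sq hω b (-a i)
    simp only [sub_neg_eq_add, add_comm _ (a i)] at h
    calc Vb + ‖a i + mb‖ ^ 2 = ∑ j, ω j * ‖a i + b j‖ ^ 2 := h.symm
      _ ≤ ∑ j, ω j := Finset.sum_le_sum fun j _ =>
          mul_le_of_le_one_right (hω₀ j) (pow_le_one₀ (norm_nonneg _) (hab i j))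
      _ = 1 := hω
  have h := sum_mul_norm_sub_sq hw a (-mb)
  simp only [sub_neg_eq_add] at h
  have hsum : ∑ i, w i * ‖a i + mb‖ ^ 2 ≤ 1 - Vb :=
    calc ∑ i, w i * ‖a i + mb‖ ^ 2 ≤ ∑ i, w i * (1 - Vb) :=
          Finset.sum_le_sum fun i _ => mul_le_mul_of_nonneg_left (by linarith [hrow i]) (hw₀ i)
      _ = 1 - Vb := by rw [← Finset.sum_mul, hw, one_mul]
  nlinarith [sq_nonneg ‖ma + mb‖]

lemma exists_variance_ge [FiniteDimensional ℝ E] (hne : S.Nonempty) (hb : IsBounded S) {c : E}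
    (hmin : ∀ c', supDist S c ≤ supDist S c') {ε : ℝ} (hε : 0 < ε) :
    ∃ (ι : Type) (_ : Fintype ι) (w : ι → ℝ) (z : ι → E), (∀ i, 0 ≤ w i) ∧ ∑ i, w i = 1 ∧
      (∀ i, z i ∈ S) ∧ supDist S c ^ 2 - 2 * supDist S c * ε - ε ^ 2 ≤
        ∑ i, w i * ‖z i - ∑ j, w j • z j‖ ^ 2 := by
  set r := supDist S c
  obtain ⟨p, hp, hcp⟩ :=
    Metric.mem_closure_iff.1 (mem_closure_convexHull_far hne hb hmin hε) ε hε
  obtain ⟨ι, _, w, z, hw₀, hw, hz, rfl⟩ := mem_convexHull_iff_exists_fintype.1 hp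
  refine ⟨ι, inferInstance, w, z, hw₀, hw, fun i => (hz i).1, ?_⟩
  have hr : 0 ≤ r := supDist_nonneg hne hb c
  have hfar_i : ∀ i, r ^ 2 - 2 * r * ε ≤ ‖z i - c‖ ^ 2 := fun i => by
    have hzi : r - ε < ‖z i - c‖ := (hz i).2
    rcases le_total (r - ε) 0 with h | h <;> nlinarith [norm_nonneg (z i - c)]
  have hfar : r ^ 2 - 2 * r * ε ≤ ∑ i, w i * ‖z i - c‖ ^ 2 :=
    calc r ^ 2 - 2 * r * ε = ∑ i, w i * (r ^ 2 - 2 * r * ε) := by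
          rw [← Finset.sum_mul, hw, one_mul]
      _ ≤ ∑ i, w i * ‖z i - c‖ ^ 2 := Finset.sum_le_sum fun i _ =>
          mul_le_mul_of_nonneg_left (hfar_i i) (hw₀ i)
  have hmean : ‖∑ j, w j • z j - c‖ ^ 2 ≤ ε ^ 2 := by
    rw [← dist_eq_norm, dist_comm]
    exact pow_le_pow_left₀ dist_nonneg hcp.le 2
  linarith [sum_mul_norm_sub_sq hw z c]

theorem exists_closedBalls_of_norm_add_le_one [FiniteDimensional ℝ E] {S T : Set E}
    (hS : S.Nonempty) (hT : T.Nonempty) (h : ∀ a ∈ S, ∀ b ∈ T, ‖a + b‖ ≤ 1) :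
    ∃ c ∈ closure (convexHull ℝ S), ∃ d ∈ closure (convexHull ℝ T), ∃ ρ₁ ρ₂ : ℝ,
      0 ≤ ρ₁ ∧ 0 ≤ ρ₂ ∧ ρ₁ ^ 2 + ρ₂ ^ 2 ≤ 1 ∧
      (∀ a ∈ S, ‖a - c‖ ≤ ρ₁) ∧ ∀ b ∈ T, ‖b - d‖ ≤ ρ₂ := by
  obtain ⟨a₀, ha₀⟩ := hS
  obtain ⟨b₀, hb₀⟩ := hT
  have hbS : IsBounded S := (Metric.isBounded_closedBall (x := -b₀) (r := 1)).subset
    fun a ha => by rw [Metric.mem_closedBall, dist_eq_norm, sub_neg_eq_add]; exact h a ha b₀ hb₀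
  have hbT : IsBounded T := (Metric.isBounded_closedBall (x := -a₀) (r := 1)).subset
    fun b hb => by
      rw [Metric.mem_closedBall, dist_eq_norm, sub_neg_eq_add, add_comm]; exact h a₀ ha₀ b hb
  obtain ⟨c, hc⟩ := exists_forall_supDist_le ⟨a₀, ha₀⟩ hbS
  obtain ⟨d, hd⟩ := exists_forall_supDist_le ⟨b₀, hb₀⟩ hbT
  set r := supDist S c
  set s := supDist T d
  have key : ∀ ε > 0, r ^ 2 + s ^ 2 ≤ 1 + 2 * (r + s) * ε + 2 * ε ^ 2 := fun ε hε => by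
    obtain ⟨ι, _, w, a, hw₀, hw, ha, hVa⟩ := exists_variance_ge ⟨a₀, ha₀⟩ hbS hc hε
    obtain ⟨κ, _, ω, b, hω₀, hω, hb, hVb⟩ := exists_variance_ge ⟨b₀, hb₀⟩ hbT hd hε
    have := variance_add_variance_le_one hw₀ hw hω₀ hω fun i j => h _ (ha i) _ (hb j)
    linarith
  refine ⟨c, closure_mono (convexHull_mono (sep_subset _ _))
      (mem_closure_convexHull_far ⟨a₀, ha₀⟩ hbS hc one_pos),
    d, closure_mono (convexHull_mono (sep_subset _ _))
      (mem_closure_convexHull_far ⟨b₀, hb₀⟩ hbT hd one_pos),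
    r, s, supDist_nonneg ⟨a₀, ha₀⟩ hbS c, supDist_nonneg ⟨b₀, hb₀⟩ hbT d, ?_,
    fun a ha => norm_sub_le_supDist hbS ha c, fun b hb => norm_sub_le_supDist hbT hb d⟩
  simpa using le_apply_zero_of_forall_pos_le (by fun_prop) key

end Circumradius

def blockProd {ι₁ ι₂ : Type*} (K₁ : Set (ι₁ → ℝ)) (K₂ : Set (ι₂ → ℝ)) :
    Set (ι₁ ⊕ ι₂ → ℝ) :=
  {z | (fun i => z (Sum.inl i)) ∈ K₁ ∧ (fun j => z (Sum.inr j)) ∈ K₂}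

section Product

variable {ι₁ ι₂ : Type*} {K₁ : Set (ι₁ → ℝ)} {K₂ : Set (ι₂ → ℝ)}

lemma Covers.fromBlocks {κ₁ κ₂ : Type*} [Fintype κ₁] [Fintype κ₂] {A₁ : Matrix ι₁ κ₁ ℝ}
    {A₂ : Matrix ι₂ κ₂ ℝ} (h₁ : Covers A₁ K₁) (h₂ : Covers A₂ K₂) {θ₁ θ₂ : ℝ} (hθ₁ : 0 < θ₁)
    (hθ₂ : 0 < θ₂) (hθ : θ₁ + θ₂ = 1) :
    Covers (Matrix.fromBlocks ((√θ₁)⁻¹ • A₁) 0 0 ((√θ₂)⁻¹ • A₂)) (blockProd K₁ K₂) := by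
  obtain ⟨v₁, hv₁⟩ := h₁
  obtain ⟨v₂, hv₂⟩ := h₂
  refine ⟨Sum.elim v₁ v₂, fun z ⟨hz₁, hz₂⟩ => ?_⟩
  obtain ⟨u₁, hu₁, hAu₁⟩ := hv₁ _ hz₁
  obtain ⟨u₂, hu₂, hAu₂⟩ := hv₂ _ hz₂
  refine ⟨Sum.elim (√θ₁ • u₁) (√θ₂ • u₂), ?_, ?_⟩
  · rw [← sq_le_one_iff₀ (norm_nonneg _), norm_toLp_sq_eq_dotProduct, sumElim_dotProduct_sumElim,
      dotProduct_smul, smul_dotProduct, dotProduct_smul, smul_dotProduct,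
      ← norm_toLp_sq_eq_dotProduct, ← norm_toLp_sq_eq_dotProduct]
    simp only [smul_eq_mul, ← mul_assoc, Real.mul_self_sqrt hθ₁.le, Real.mul_self_sqrt hθ₂.le]
    nlinarith [pow_le_one₀ (n := 2) (norm_nonneg _) hu₁, pow_le_one₀ (n := 2) (norm_nonneg _) hu₂]
  · ext (i | j)
    · simp [fromBlocks_mulVec, smul_mulVec, mulVec_smul, smul_smul, (Real.sqrt_pos.2 hθ₁).ne',
        hAu₁]
    · simp [fromBlocks_mulVec, smul_mulVec, mulVec_smul, smul_smul, (Real.sqrt_pos.2 hθ₂).ne',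
        hAu₂]

variable [Fintype ι₁] [Fintype ι₂]

lemma isBounded_blockProd (h₁ : IsBounded K₁) (h₂ : IsBounded K₂) :
    IsBounded (blockProd K₁ K₂) := by
  have := (IsometryEquiv.sumArrowIsometryEquivProdArrow (α := ι₁) (β := ι₂) (γ := ℝ)).isometry
    |>.antilipschitz.isBounded_preimage (h₁.prod h₂)
  exact this

lemma sum_sq_fromBlocks {κ₁ κ₂ : Type*} [Fintype κ₁] [Fintype κ₂] (A₁ : Matrix ι₁ κ₁ ℝ)
    (A₂ : Matrix ι₂ κ₂ ℝ) (a b : ℝ) :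
    ∑ i, ∑ k, Matrix.fromBlocks (a • A₁) 0 0 (b • A₂) i k ^ 2 =
      a ^ 2 * ∑ i, ∑ k, A₁ i k ^ 2 + b ^ 2 * ∑ i, ∑ k, A₂ i k ^ 2 := by
  simp [Fintype.sum_sum_type, mul_pow, Finset.mul_sum]

lemma mulVec_sumElim {κ : Type*} (M : Matrix κ (ι₁ ⊕ ι₂) ℝ) (p : ι₁ → ℝ) (q : ι₂ → ℝ) :
    M *ᵥ Sum.elim p q = M.submatrix id Sum.inl *ᵥ p + M.submatrix id Sum.inr *ᵥ q := by
  ext k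
  simp [mulVec, dotProduct, Fintype.sum_sum_type]

variable [DecidableEq ι₁] [DecidableEq ι₂]

lemma Gamma_two_blockProd_le (h₁ : IsBounded K₁) (h₂ : IsBounded K₂) :
    Gamma 2 (blockProd K₁ K₂) ≤ Gamma 2 K₁ + Gamma 2 K₂ := by
  refine le_of_forall_pos_lt_add fun ε hε => ?_
  obtain ⟨A₁, hA₁, hlt₁⟩ := exists_covers_lt h₁ (lt_add_of_pos_right _ (by positivity : 0 < ε / 4))
  obtain ⟨A₂, hA₂, hlt₂⟩ := exists_covers_lt h₂ (lt_add_of_pos_right _ (by positivity : 0 < ε / 4))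
  set f₁ := ∑ i, ∑ k, A₁ i k ^ 2
  set f₂ := ∑ i, ∑ k, A₂ i k ^ 2
  set a₁ := √f₁ + ε / 4 with ha₁_def
  set a₂ := √f₂ + ε / 4 with ha₂_def
  have ha₁ : 0 < a₁ := by positivity
  have ha₂ : 0 < a₂ := by positivity
  have hf₁ : f₁ ≤ a₁ ^ 2 := (Real.sqrt_le_left ha₁.le).1 (by linarith [ha₁_def])
  have hf₂ : f₂ ≤ a₂ ^ 2 := (Real.sqrt_le_left ha₂.le).1 (by linarith [ha₂_def])
  have hcov := hA₁.fromBlocks hA₂ (θ₁ := a₁ / (a₁ + a₂)) (θ₂ := a₂ / (a₁ + a₂)) (by positivity)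
    (by positivity) (by field_simp)
  calc Gamma 2 (blockProd K₁ K₂)
      ≤ √((a₁ + a₂) / a₁ * f₁ + (a₁ + a₂) / a₂ * f₂) := by
        have := Gamma_two_le_of_covers hcov
        rwa [sum_sq_fromBlocks, inv_pow, inv_pow, Real.sq_sqrt (by positivity),
          Real.sq_sqrt (by positivity), inv_div, inv_div] at this
    _ ≤ a₁ + a₂ := sqrt_div_mul_add_div_mul_le ha₁ ha₂ hf₁ hf₂
    _ < Gamma 2 K₁ + Gamma 2 K₂ + ε := by linarith [ha₁_def, ha₂_def]

lemma Gamma_two_add_le_of_covers_of_isUnit {G : Matrix (ι₁ ⊕ ι₂) (ι₁ ⊕ ι₂) ℝ} (hG : IsUnit G)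
    (h : Covers G (blockProd K₁ K₂)) (hne₁ : K₁.Nonempty) (hne₂ : K₂.Nonempty) :
    Gamma 2 K₁ + Gamma 2 K₂ ≤ √(∑ i, ∑ j, G i j ^ 2) := by
  have hG' := (isUnit_iff_isUnit_det G).1 hG
  obtain ⟨v, hv⟩ := h
  set C₁ := G⁻¹.submatrix id Sum.inl
  set C₂ := G⁻¹.submatrix id Sum.inr
  set v₁ : ι₁ → ℝ := fun i => v (Sum.inl i)
  set v₂ : ι₂ → ℝ := fun j => v (Sum.inr j)
  set S := (fun x => WithLp.toLp 2 (C₁ *ᵥ (x + v₁))) '' K₁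
  set T := (fun y => WithLp.toLp 2 (C₂ *ᵥ (y + v₂))) '' K₂
  have hST : ∀ a ∈ S, ∀ b ∈ T, ‖a + b‖ ≤ 1 := by
    rintro _ ⟨x, hx, rfl⟩ _ ⟨y, hy, rfl⟩
    obtain ⟨u, hu, hGu⟩ := hv (Sum.elim x y) ⟨hx, hy⟩
    have hsum : Sum.elim (x + v₁) (y + v₂) = Sum.elim x y + v := by
      ext (i | j) <;> rfl
    rwa [← WithLp.toLp_add, ← mulVec_sumElim, hsum, ← hGu, mulVec_mulVec,
      nonsing_inv_mul _ hG', one_mulVec]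
  obtain ⟨c, hc, d, hd, ρ₁, ρ₂, hρ₁, hρ₂, hρ, hS, hT⟩ :=
    exists_closedBalls_of_norm_add_le_one (hne₁.image _) (hne₂.image _) hST
  have h₁ := Gamma_two_le_of_leftInverse (submatrix_mul_inv_submatrix hG' Sum.inl_injective) hρ₁
    hc fun x hx => hS _ ⟨x, hx, rfl⟩
  have h₂ := Gamma_two_le_of_leftInverse (submatrix_mul_inv_submatrix hG' Sum.inr_injective) hρ₂
    hd fun y hy => hT _ ⟨y, hy, rfl⟩
  calc Gamma 2 K₁ + Gamma 2 K₂
      ≤ ρ₁ * √(∑ i, ∑ k, G (Sum.inl i) k ^ 2) + ρ₂ * √(∑ j, ∑ k, G (Sum.inr j) k ^ 2) :=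
        add_le_add h₁ h₂
    _ ≤ √(∑ i, ∑ k, G (Sum.inl i) k ^ 2 + ∑ j, ∑ k, G (Sum.inr j) k ^ 2) :=
        mul_sqrt_add_mul_sqrt_le hρ (by positivity) (by positivity)
    _ = √(∑ i, ∑ j, G i j ^ 2) := by rw [Fintype.sum_sum_type]

lemma le_Gamma_two_blockProd (h₁ : IsBounded K₁) (h₂ : IsBounded K₂) (hne₁ : K₁.Nonempty)
    (hne₂ : K₂.Nonempty) : Gamma 2 K₁ + Gamma 2 K₂ ≤ Gamma 2 (blockProd K₁ K₂) := by
  refine le_Gamma_two (isBounded_blockProd h₁ h₂) fun A hA => ?_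
  have key : ∀ ε > 0, Gamma 2 K₁ + Gamma 2 K₂ ≤
      √(∑ i, ∑ j, A i j ^ 2 + ε * Fintype.card (ι₁ ⊕ ι₂)) := fun ε hε =>
    sum_sq_regSqrt A hε.le ▸ Gamma_two_add_le_of_covers_of_isUnit (isUnit_regSqrt A hε)
      (covers_regSqrt hA hε) hne₁ hne₂
  simpa using le_apply_zero_of_forall_pos_le (by fun_prop) key

end Product

/-- product formula for `Γ₂`:
`Γ₂(K₁ × K₂) = Γ₂(K₁) + Γ₂(K₂)`. -/
theorem Gamma_two_prod {d₁ d₂ : ℕ} (K₁ : Set (Fin d₁ → ℝ))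
    (K₂ : Set (Fin d₂ → ℝ)) (h₁ : IsBounded K₁) (h₂ : IsBounded K₂)
    (hne₁ : K₁.Nonempty) (hne₂ : K₂.Nonempty) :
    Gamma 2 {z : (Fin d₁ ⊕ Fin d₂) → ℝ |
        (fun i => z (Sum.inl i)) ∈ K₁ ∧ (fun j => z (Sum.inr j)) ∈ K₂} =
      Gamma 2 K₁ + Gamma 2 K₂ :=
  le_antisymm (Gamma_two_blockProd_le h₁ h₂) (le_Gamma_two_blockProd h₁ h₂ hne₁ hne₂)
end
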